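/- arXiv:2105.11860 — 8 statements merged into one kernel-verified Lean document; each statement's English description precedes it below -/
import Mathlib

section
/- Let A be an n×n complex arrowhead matrix (diagonal a_1,...,a_n, last column b_1,...,b_{n-1}, last row c_1,...,c_{n-1}). There exists a common eigenvector x of A and A* (i.e., Ax = λx and A*x = conj(λ)x for some λ) that is orthogonal to the standard basis vector e_n if and only if at least one of the following holds: (i) b_j = c_j = 0 for some j ∈ {1,...,n-1}; (ii) there exist i ≠ j in {1,...,n-1} with a_i = a_j and b_i·conj(c_j) = b_j·conj(c_i); (iii) there exist three distinct indices i, j, k in {1,...,n-1} with a_i = a_j = a_k. -/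
/-! A vector orthogonal to `eₙ` is `x = Fin.snoc y 0`. For it, `A x = λ x` says that `a i = λ`
on the support of `y` and `c ⬝ᵥ y = 0`, and `Aᴴ x = conj λ • x` adds only `conj b ⬝ᵥ y = 0`. So
such a reducing eigenvector exists iff, over some level set of `a`, the columns `(conj b m, c m)`
are linearly dependent in `ℂ²`: one of them vanishes, two are proportional, or there are three
of them (rank–nullity). -/

open Matrix Complex

noncomputable section

def arrow {n : ℕ} (a : Fin (n + 1) → ℂ) (b c : Fin n → ℂ) :
    Matrix (Fin (n + 1)) (Fin (n + 1)) ℂ := fun i j =>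
  if i = j then a i
  else if hi : i = Fin.last n then
    (if hj : j = Fin.last n then 0 else c (j.castPred hj))
  else if hj : j = Fin.last n then b (i.castPred hi)
  else 0

open Function

section KernelVectors

variable {ι K : Type*} [Fintype ι] [Field K]

theorem Matrix.exists_mulVec_eq_zero_of_card_lt {m κ : Type*} [Fintype m] [Fintype κ]
    (M : Matrix m κ K) (h : Fintype.card m < Fintype.card κ) : ∃ z ≠ 0, M *ᵥ z = 0 := by
  obtain ⟨z, hz, hz0⟩ :=
    (Submodule.ne_bot_iff _).mp (M.mulVecLin.ker_ne_bot_of_finrank_lt (by simpa using h))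
  exact ⟨z, hz0, hz⟩

theorem mulVec_of_pair_eq_zero_iff {κ : Type*} [Fintype κ] (u v z : κ → K) :
    of ![u, v] *ᵥ z = 0 ↔ u ⬝ᵥ z = 0 ∧ v ⬝ᵥ z = 0 := by
  simp [funext_iff, Fin.forall_fin_two]

theorem dotProduct_extend_zero {κ : Type*} [Fintype κ] {e : κ → ι} (he : Injective e)
    (w : ι → K) (z : κ → K) : w ⬝ᵥ extend e z 0 = (w ∘ e) ⬝ᵥ z :=
  (Fintype.sum_of_injective e he _ _ (fun m hm => by simp [extend_apply' _ _ _ hm])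
    (fun t => by simp [he.extend_apply])).symm

theorem dotProduct_eq_sum_filter_ne_zero [DecidableEq K] (w y : ι → K) :
    w ⬝ᵥ y = ∑ m ∈ Finset.univ.filter (y · ≠ 0), w m * y m :=
  (Finset.sum_filter_of_ne fun _ _ h => right_ne_zero_of_mul h).symm

variable (u v : ι → K) (p : ι → Prop)

theorem exists_supported_of_injective {κ : Type*} [Fintype κ] {e : κ → ι}
    (he : Injective e) (hp : ∀ t, p (e t)) {z : κ → K} (hz : z ≠ 0)
    (hMz : of ![u ∘ e, v ∘ e] *ᵥ z = 0) :
    ∃ y : ι → K, y ≠ 0 ∧ (∀ m, y m ≠ 0 → p m) ∧ u ⬝ᵥ y = 0 ∧ v ⬝ᵥ y = 0 := by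
  rw [mulVec_of_pair_eq_zero_iff, ← dotProduct_extend_zero he, ← dotProduct_extend_zero he]
    at hMz
  refine ⟨extend e z 0, ?_, fun m hm => ?_, hMz⟩
  · obtain ⟨t, ht⟩ := Function.ne_iff.mp hz
    exact Function.ne_iff.mpr ⟨e t, by simpa [he.extend_apply] using ht⟩
  · obtain ⟨t, rfl⟩ : m ∈ Set.range e := by
      by_contra h
      exact hm (by simp [extend_apply' _ _ _ h])
    exact hp t

theorem exists_supported_dotProduct_eq_zero_iff :
    (∃ y : ι → K, y ≠ 0 ∧ (∀ m, y m ≠ 0 → p m) ∧ u ⬝ᵥ y = 0 ∧ v ⬝ᵥ y = 0) ↔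
      (∃ j, p j ∧ u j = 0 ∧ v j = 0) ∨
      (∃ i j, i ≠ j ∧ p i ∧ p j ∧ u i * v j = u j * v i) ∨
      (∃ i j k, i ≠ j ∧ j ≠ k ∧ i ≠ k ∧ p i ∧ p j ∧ p k) := by
  classical
  constructor
  · rintro ⟨y, hy0, hyp, hu, hv⟩
    rw [dotProduct_eq_sum_filter_ne_zero] at hu hv
    set s := Finset.univ.filter (y · ≠ 0)
    have hmem : ∀ m, m ∈ s ↔ y m ≠ 0 := by simp [s]
    obtain ⟨i, hi⟩ := Function.ne_iff.mp hy0
    have : 0 < s.card := Finset.card_pos.mpr ⟨i, (hmem i).2 hi⟩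
    obtain h | h | h : s.card = 1 ∨ s.card = 2 ∨ 2 < s.card := by omega
    · obtain ⟨j, hs⟩ := Finset.card_eq_one.mp h
      have hyj : y j ≠ 0 := (hmem j).1 (by simp [hs])
      rw [hs, Finset.sum_singleton] at hu hv
      exact Or.inl ⟨j, hyp j hyj, (mul_eq_zero.mp hu).resolve_right hyj,
        (mul_eq_zero.mp hv).resolve_right hyj⟩
    · obtain ⟨i, j, hij, hs⟩ := Finset.card_eq_two.mp h
      have hyi : y i ≠ 0 := (hmem i).1 (by simp [hs])
      have hyj : y j ≠ 0 := (hmem j).1 (by simp [hs])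
      rw [hs, Finset.sum_pair hij] at hu hv
      have hdet : (u i * v j - u j * v i) * y i = 0 := by
        linear_combination v j * hu - u j * hv
      exact Or.inr <| Or.inl ⟨i, j, hij, hyp i hyi, hyp j hyj,
        sub_eq_zero.mp ((mul_eq_zero.mp hdet).resolve_right hyi)⟩
    · obtain ⟨i, hi, j, hj, k, hk, hij, hik, hjk⟩ := Finset.two_lt_card.mp h
      exact Or.inr <| Or.inr ⟨i, j, k, hij, hjk, hik, hyp i ((hmem i).1 hi),
        hyp j ((hmem j).1 hj), hyp k ((hmem k).1 hk)⟩
  · rintro (⟨j, hpj, huj, hvj⟩ | ⟨i, j, hij, hpi, hpj, hdet⟩ |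
      ⟨i, j, k, hij, hjk, hik, hpi, hpj, hpk⟩)
    · exact exists_supported_of_injective u v p (e := ![j])
        (injective_of_subsingleton _) (by simpa) one_ne_zero (by simp [dotProduct, huj, hvj])
    · obtain ⟨z, hz, hMz⟩ := (exists_mulVec_eq_zero_iff
        (M := of ![u ∘ ![i, j], v ∘ ![i, j]])).mpr (by simp [det_fin_two, hdet])
      exact exists_supported_of_injective u v p (injective_pair_iff_ne.mpr hij)
        (Fin.forall_fin_two.mpr ⟨hpi, hpj⟩) hz hMz
    · obtain ⟨z, hz, hMz⟩ :=
        (of ![u ∘ ![i, j, k], v ∘ ![i, j, k]]).exists_mulVec_eq_zero_of_card_lt (by simp)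
      have he : Injective ![i, j, k] := by
        rw [vecCons, Fin.cons_injective_iff]
        simp [injective_pair_iff_ne.mpr hjk, hij, hik]
      exact exists_supported_of_injective u v p he
        (by simp [Fin.forall_fin_succ, hpi, hpj, hpk]) hz hMz

end KernelVectors

theorem Pi.mul_eq_smul_iff {ι K : Type*} [MonoidWithZero K] [IsRightCancelMulZero K]
    {d y : ι → K} {lam : K} :
    d * y = lam • y ↔ ∀ i, y i ≠ 0 → d i = lam := by
  simp only [funext_iff, Pi.mul_apply, Pi.smul_apply, smul_eq_mul]
  exact forall_congr' fun i => by by_cases h : y i = 0 <;> simp [h]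

theorem Fin.smul_snoc {n : ℕ} {M α : Type*} [SMul M α] (lam : M) (y : Fin n → α) (t : α) :
    lam • (Fin.snoc y t : Fin (n + 1) → α) = Fin.snoc (lam • y) (lam • t) := by
  ext i
  refine Fin.lastCases ?_ (fun i => ?_) i <;> simp

theorem star_mul_eq_star_mul_iff {R : Type*} [CommSemiring R] [StarRing R] {x y z w : R} :
    star x * y = star z * w ↔ x * star y = z * star w := by
  rw [← star_inj, star_mul, star_mul, star_star, star_star, mul_comm (star y), mul_comm (star w)]

section Arrow

variable {n : ℕ} (a : Fin (n + 1) → ℂ) (b c : Fin n → ℂ)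

theorem conjTranspose_arrow : (arrow a b c)ᴴ = arrow (star a) (star c) (star b) := by
  ext i j
  simp only [conjTranspose_apply, arrow]
  split_ifs <;> simp_all [eq_comm]

theorem arrow_mulVec_snoc_zero (y : Fin n → ℂ) :
    arrow a b c *ᵥ Fin.snoc y 0 = Fin.snoc (Fin.init a * y) (c ⬝ᵥ y) := by
  ext i
  refine Fin.lastCases ?_ (fun i => ?_) i
  · simp [mulVec, dotProduct, Fin.sum_univ_castSucc, arrow, (Fin.castSucc_ne_last _).symm]
  · simp [mulVec, dotProduct, Fin.sum_univ_castSucc, arrow, Fin.init]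

theorem arrow_mulVec_snoc_zero_eq_smul_iff (y : Fin n → ℂ) (lam : ℂ) :
    arrow a b c *ᵥ Fin.snoc y 0 = lam • Fin.snoc y 0 ↔
      (∀ i, y i ≠ 0 → a i.castSucc = lam) ∧ c ⬝ᵥ y = 0 := by
  rw [arrow_mulVec_snoc_zero, Fin.smul_snoc, smul_zero, Fin.snoc_inj, Pi.mul_eq_smul_iff]
  rfl

theorem exists_reducing_eigenvector_arrow_iff :
    (∃ x : Fin (n + 1) → ℂ, x ≠ 0 ∧ x (Fin.last n) = 0 ∧ ∃ lam : ℂ,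
        arrow a b c *ᵥ x = lam • x ∧ (arrow a b c)ᴴ *ᵥ x = starRingEnd ℂ lam • x) ↔
      ∃ lam : ℂ, ∃ y : Fin n → ℂ, y ≠ 0 ∧ (∀ i, y i ≠ 0 → a i.castSucc = lam) ∧
        star b ⬝ᵥ y = 0 ∧ c ⬝ᵥ y = 0 := by
  have hsnoc_iff : ∀ (y : Fin n → ℂ) lam,
      (arrow a b c *ᵥ Fin.snoc y 0 = lam • Fin.snoc y 0 ∧
        (arrow a b c)ᴴ *ᵥ Fin.snoc y 0 = starRingEnd ℂ lam • Fin.snoc y 0) ↔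
      (∀ i, y i ≠ 0 → a i.castSucc = lam) ∧ star b ⬝ᵥ y = 0 ∧ c ⬝ᵥ y = 0 := by
    intro y lam
    rw [conjTranspose_arrow, arrow_mulVec_snoc_zero_eq_smul_iff,
      arrow_mulVec_snoc_zero_eq_smul_iff]
    simp only [Pi.star_apply, starRingEnd_apply, star_inj]
    tauto
  have hsnoc_ne_zero : ∀ y : Fin n → ℂ, (Fin.snoc y 0 : Fin (n + 1) → ℂ) ≠ 0 ↔ y ≠ 0 := by
    simp [funext_iff, Fin.forall_fin_succ']
  constructor
  · rintro ⟨x, hx0, hxl, lam, hx⟩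
    rw [← Fin.snoc_init_self x, hxl] at hx0 hx
    exact ⟨lam, Fin.init x, (hsnoc_ne_zero _).mp hx0, (hsnoc_iff _ _).mp hx⟩
  · rintro ⟨lam, y, hy0, hy⟩
    exact ⟨Fin.snoc y 0, (hsnoc_ne_zero y).mpr hy0, Fin.snoc_last _ _, lam,
      (hsnoc_iff y lam).mpr hy⟩

end Arrow

/-- an arrowhead matrix has a reducing eigenvector orthogonal to eₙ
iff one of conditions (i), (ii), (iii) holds. -/
theorem stmt1 {n : ℕ} (a : Fin (n + 1) → ℂ) (b c : Fin n → ℂ)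
    (A : Matrix (Fin (n + 1)) (Fin (n + 1)) ℂ) (hA : A = arrow a b c) :
    (∃ x : Fin (n + 1) → ℂ, x ≠ 0 ∧ x (Fin.last n) = 0 ∧
      ∃ lam : ℂ, A.mulVec x = lam • x ∧
        Aᴴ.mulVec x = (starRingEnd ℂ lam) • x) ↔
    ((∃ j : Fin n, b j = 0 ∧ c j = 0) ∨
     (∃ i j : Fin n, i ≠ j ∧ a i.castSucc = a j.castSucc ∧
        b i * starRingEnd ℂ (c j) = b j * starRingEnd ℂ (c i)) ∨
     (∃ i j k : Fin n, i ≠ j ∧ j ≠ k ∧ i ≠ k ∧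
        a i.castSucc = a j.castSucc ∧ a j.castSucc = a k.castSucc)) := by
  subst hA
  rw [exists_reducing_eigenvector_arrow_iff]
  simp only [exists_supported_dotProduct_eq_zero_iff, exists_or, Pi.star_apply, star_eq_zero,
    star_mul_eq_star_mul_iff, starRingEnd_apply]
  refine or_congr ⟨?_, ?_⟩ (or_congr ⟨?_, ?_⟩ ⟨?_, ?_⟩)
  · rintro ⟨-, j, -, hj⟩
    exact ⟨j, hj⟩
  · rintro ⟨j, hj⟩
    exact ⟨_, j, rfl, hj⟩
  · rintro ⟨-, i, j, hij, rfl, hj, h⟩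
    exact ⟨i, j, hij, hj.symm, h⟩
  · rintro ⟨i, j, hij, ha, h⟩
    exact ⟨_, i, j, hij, rfl, ha.symm, h⟩
  · rintro ⟨-, i, j, k, hij, hjk, hik, rfl, hj, hk⟩
    exact ⟨i, j, k, hij, hjk, hik, hj.symm, hj.trans hk.symm⟩
  · rintro ⟨i, j, k, hij, hjk, hik, hij', hjk'⟩
    exact ⟨_, i, j, k, hij, hjk, hik, rfl, hij'.symm, (hij'.trans hjk').symm⟩
end
end

section
/- Let P be an n×n Hermitian idempotent arrowhead matrix (P = P* = P²). Then either P is diagonal with all diagonal entries equal to 0 or 1, or there exist an index i ∈ {1,...,n-1}, a real number t ∈ (0,1), and α ∈ ℂ with |α| = √(t(1-t)) such that P_{ii} = t, P_{nn} = 1 - t, P_{in} = α, P_{ni} = conj(α), P_{jj} ∈ {0,1} for j ≠ i, j < n, and all other entries of P are zero. -/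
/-!
Write `c j` for the entry of `P` in row `j < n` of the last column. Since row `j` of `P` has
support in `{j, n}`, the entries `(j, j)`, `(j, n)` and, for `k ≠ j`, `(j, k)` of `P * P = P` read
`P j j ^ 2 + |c j| ^ 2 = P j j`, `P j j * c j + c j * P n n = c j` and
`c j * conj (c k) = 0`. So at most one `c i` is nonzero. If none is, `P` is diagonal with
idempotent entries. Otherwise `t = P i i` is real with `t ^ 2 + |c i| ^ 2 = t`, which forces
`0 < t < 1` and `|c i| ^ 2 = t (1 - t)`, and cancelling `c i` from the second identity gives
`P n n = 1 - t`.
-/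

open Matrix Complex

noncomputable section

/-- `P` is an arrowhead matrix: nonzero entries only on the diagonal, last row,
and last column. -/
def IsArrowhead {n : ℕ} (P : Matrix (Fin (n + 1)) (Fin (n + 1)) ℂ) : Prop :=
  ∀ i j, i ≠ j → i ≠ Fin.last n → j ≠ Fin.last n → P i j = 0

theorem Matrix.isIdempotentElem_apply_self_of_offDiag_eq_zero {ι R : Type*} [Fintype ι]
    [Semiring R] {P : Matrix ι ι R} (hP : IsIdempotentElem P)
    (hoff : ∀ p q, p ≠ q → P p q = 0) (p : ι) : IsIdempotentElem (P p p) := by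
  have hsum : (P * P) p p = P p p * P p p :=
    Fintype.sum_eq_single p fun m hm => mul_eq_zero_of_left (hoff p m (Ne.symm hm)) _
  rw [IsIdempotentElem, ← hsum, hP.eq]

theorem Complex.mem_Ioo_and_norm_eq_sqrt_of_mul_self_add_normSq {t : ℝ} {α : ℂ}
    (h : t * t + normSq α = t) (hα : α ≠ 0) :
    t ∈ Set.Ioo 0 1 ∧ ‖α‖ = √(t * (1 - t)) := by
  have hpos : 0 < normSq α := normSq_pos.mpr hα
  refine ⟨⟨by nlinarith, by nlinarith⟩, ?_⟩
  rw [show t * (1 - t) = ‖α‖ ^ 2 by rw [Complex.sq_norm]; linarith,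
    Real.sqrt_sq (norm_nonneg α)]

namespace IsArrowhead

variable {n : ℕ} {P : Matrix (Fin (n + 1)) (Fin (n + 1)) ℂ}

theorem mul_apply_castSucc (harr : IsArrowhead P) (Q : Matrix (Fin (n + 1)) (Fin (n + 1)) ℂ)
    (j : Fin n) (q : Fin (n + 1)) :
    (P * Q) j.castSucc q =
      P j.castSucc j.castSucc * Q j.castSucc q + P j.castSucc (Fin.last n) * Q (Fin.last n) q :=
  Fintype.sum_eq_add _ _ (Fin.castSucc_ne_last j) fun _ ⟨hj, hlast⟩ =>
    mul_eq_zero_of_left (harr _ _ (Ne.symm hj) (Fin.castSucc_ne_last j) hlast) _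

theorem apply_eq_zero_of_ne (harr : IsArrowhead P) (hherm : P.IsHermitian)
    {p q : Fin (n + 1)} (hpq : p ≠ q)
    (hcol : ∀ k : Fin n,
      p = k.castSucc ∧ q = Fin.last n ∨ p = Fin.last n ∧ q = k.castSucc →
        P k.castSucc (Fin.last n) = 0) :
    P p q = 0 := by
  rcases Fin.eq_castSucc_or_eq_last p with ⟨j, rfl⟩ | rfl <;>
    rcases Fin.eq_castSucc_or_eq_last q with ⟨k, rfl⟩ | rfl
  · exact harr _ _ hpq (Fin.castSucc_ne_last j) (Fin.castSucc_ne_last k)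
  · exact hcol j (Or.inl ⟨rfl, rfl⟩)
  · rw [← hherm.apply, hcol k (Or.inr ⟨rfl, rfl⟩), star_zero]
  · exact absurd rfl hpq

variable (harr : IsArrowhead P) (hidem : IsIdempotentElem P)
include harr hidem

theorem apply_castSucc_mul_self_add_normSq (hherm : P.IsHermitian) (j : Fin n) :
    P j.castSucc j.castSucc * P j.castSucc j.castSucc + normSq (P j.castSucc (Fin.last n)) =
      P j.castSucc j.castSucc := by
  have h := harr.mul_apply_castSucc P j j.castSucc
  rw [hidem.eq, ← hherm.apply (Fin.last n) j.castSucc] at h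
  rw [← mul_conj]
  exact h.symm

theorem apply_castSucc_mul_add_mul_apply_last (j : Fin n) :
    P j.castSucc j.castSucc * P j.castSucc (Fin.last n) +
        P j.castSucc (Fin.last n) * P (Fin.last n) (Fin.last n) =
      P j.castSucc (Fin.last n) := by
  rw [← harr.mul_apply_castSucc, hidem.eq]

theorem apply_last_mul_conj_eq_zero (hherm : P.IsHermitian) {j k : Fin n} (hjk : j ≠ k) :
    P j.castSucc (Fin.last n) * starRingEnd ℂ (P k.castSucc (Fin.last n)) = 0 := by
  have h := harr.mul_apply_castSucc P j k.castSucc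
  rw [hidem.eq, harr _ _ ((Fin.castSucc_injective n).ne hjk) (Fin.castSucc_ne_last j)
    (Fin.castSucc_ne_last k), mul_zero, zero_add, ← hherm.apply (Fin.last n) k.castSucc] at h
  exact h.symm

end IsArrowhead

/-- classification of Hermitian idempotent arrowhead matrices. -/
theorem stmt3 {n : ℕ} (P : Matrix (Fin (n + 1)) (Fin (n + 1)) ℂ)
    (harr : IsArrowhead P) (hherm : Pᴴ = P) (hidem : P * P = P) :
    ((∀ i j, i ≠ j → P i j = 0) ∧ (∀ i, P i i = 0 ∨ P i i = 1)) ∨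
    (∃ (i : Fin n) (t : ℝ) (α : ℂ), 0 < t ∧ t < 1 ∧
      ‖α‖ = Real.sqrt (t * (1 - t)) ∧
      P i.castSucc i.castSucc = (t : ℂ) ∧
      P (Fin.last n) (Fin.last n) = (1 - t : ℝ) ∧
      P i.castSucc (Fin.last n) = α ∧
      P (Fin.last n) i.castSucc = starRingEnd ℂ α ∧
      (∀ j : Fin n, j ≠ i →
        (P j.castSucc j.castSucc = 0 ∨ P j.castSucc j.castSucc = 1)) ∧
      (∀ p q, p ≠ q → ¬(p = i.castSucc ∧ q = Fin.last n) →
        ¬(p = Fin.last n ∧ q = i.castSucc) → P p q = 0)) := by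
  by_cases hcol : ∀ j : Fin n, P j.castSucc (Fin.last n) = 0
  · have hoff : ∀ p q, p ≠ q → P p q = 0 := fun p q hpq =>
      harr.apply_eq_zero_of_ne hherm hpq fun k _ => hcol k
    exact Or.inl ⟨hoff, fun p => IsIdempotentElem.iff_eq_zero_or_one.mp
      (isIdempotentElem_apply_self_of_offDiag_eq_zero hidem hoff p)⟩
  obtain ⟨i, hi⟩ := not_forall.mp hcol
  have hcol_ne : ∀ j, j ≠ i → P j.castSucc (Fin.last n) = 0 := fun j hji =>
    (map_eq_zero _).mp ((mul_eq_zero.mp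
      (harr.apply_last_mul_conj_eq_zero hidem hherm hji.symm)).resolve_left hi)
  set t := (P i.castSucc i.castSucc).re
  have hPii : P i.castSucc i.castSucc = t :=
    (conj_eq_iff_re.mp (IsHermitian.apply hherm _ _)).symm
  have hnormSq : t * t + normSq (P i.castSucc (Fin.last n)) = t := by
    have h := harr.apply_castSucc_mul_self_add_normSq hidem hherm i
    rw [hPii] at h
    exact_mod_cast h
  obtain ⟨⟨ht0, ht1⟩, hnorm⟩ :=
    Complex.mem_Ioo_and_norm_eq_sqrt_of_mul_self_add_normSq hnormSq hi
  have hlast : P (Fin.last n) (Fin.last n) = (1 - t : ℝ) := by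
    have h := harr.apply_castSucc_mul_add_mul_apply_last hidem i
    rw [hPii] at h
    push_cast
    exact mul_left_cancel₀ hi (by linear_combination h)
  refine Or.inr ⟨i, t, _, ht0, ht1, hnorm, hPii, hlast, rfl,
    (IsHermitian.apply hherm _ _).symm, ?_, ?_⟩
  · intro j hji
    have h := harr.apply_castSucc_mul_self_add_normSq hidem hherm j
    rw [hcol_ne j hji, map_zero, ofReal_zero, add_zero] at h
    exact IsIdempotentElem.iff_eq_zero_or_one.mp h
  · intro p q hpq hiq hqi
    refine harr.apply_eq_zero_of_ne hherm hpq fun k hk => hcol_ne k ?_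
    rintro rfl
    rcases hk with h | h
    exacts [hiq h, hqi h]
end
end

section
/- Let H = diag[h_1,...,h_n] be a real diagonal matrix and K a Hermitian arrowhead matrix with diagonal k_1,...,k_n and last-column entries m_1,...,m_{n-1} all strictly positive (with k_1,...,k_{n-1} pairwise distinct). For every t > 0, the maximal eigenvalue ξ₊(t) of H + tK is strictly greater than h_j + t·k_j for every j = 1,...,n-1, the eigenvalue ξ₊(t) is simple, and a corresponding eigenvector can be chosen with all n coordinates strictly positive. -/
/-!
Write `d` for the diagonal of `H + tK` and `w j = t m_j > 0` for its arm. A vector `v` with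
`(H + tK) v = μ v` and `μ > d_j` for all `j < n` is forced by the first `n - 1` rows to be
`v_n • (w_j / (μ - d_j), 1)`, and the last row then says that `μ` is a root of the secular
function `μ - d_n - ∑ w_j² / (μ - d_j)`. This function increases strictly from `-∞` to `+∞` on
`(max_j d_j, ∞)`, so it has exactly one root `ξ` there; `ξ` is an eigenvalue with the positive
eigenvector `(w_j / (ξ - d_j), 1)`, every eigenvector for it is a multiple of that one, and no
real eigenvalue exceeds it.
-/

open Matrix Complex

noncomputable section

def eigs {n : ℕ} (M : Matrix (Fin n) (Fin n) ℂ) : Set ℂ :=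
  {μ | ∃ v : Fin n → ℂ, v ≠ 0 ∧ M.mulVec v = μ • v}

section Secular

variable {ι : Type*} [Fintype ι] (a : ℝ) (d w : ι → ℝ)

def secular (μ : ℝ) : ℝ := μ - a - ∑ i, w i ^ 2 / (μ - d i)

variable {a d w}

lemma secular_lt_secular {μ ν : ℝ} (hμ : ∀ i, d i < μ) (hμν : μ < ν) :
    secular a d w μ < secular a d w ν := by
  have hsum : ∑ i, w i ^ 2 / (ν - d i) ≤ ∑ i, w i ^ 2 / (μ - d i) :=
    Finset.sum_le_sum fun i _ =>
      div_le_div_of_nonneg_left (sq_nonneg _) (sub_pos.2 (hμ i)) (by linarith)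
  unfold secular
  linarith

lemma continuousOn_secular : ContinuousOn (secular a d w) {μ | ∀ i, d i < μ} := by
  refine (continuousOn_id.sub continuousOn_const).sub
    (continuousOn_finsetSum _ fun i _ => continuousOn_const.div
      (continuousOn_id.sub continuousOn_const) fun μ hμ => ?_)
  exact sub_ne_zero.2 (hμ i).ne'

lemma secular_le_sub_div (j : ι) {μ : ℝ} (hμ : ∀ i, d i < μ) :
    secular a d w μ ≤ μ - a - w j ^ 2 / (μ - d j) := by
  have := Finset.single_le_sum (f := fun i => w i ^ 2 / (μ - d i))
    (fun i _ => div_nonneg (sq_nonneg _) (sub_pos.2 (hμ i)).le) (Finset.mem_univ j)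
  unfold secular
  linarith

lemma sub_sum_sq_le_secular {μ : ℝ} (hμ : ∀ i, d i + 1 ≤ μ) :
    μ - a - ∑ i, w i ^ 2 ≤ secular a d w μ := by
  have : ∑ i, w i ^ 2 / (μ - d i) ≤ ∑ i, w i ^ 2 :=
    Finset.sum_le_sum fun i _ => div_le_self (sq_nonneg _) (by linarith [hμ i])
  unfold secular
  linarith

lemma exists_secular_eq_zero (hw : ∀ i, w i ≠ 0) :
    ∃ ξ, (∀ i, d i < ξ) ∧ secular a d w ξ = 0 := by
  rcases isEmpty_or_nonempty ι with hι | hι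
  · exact ⟨a, isEmptyElim, by simp [secular]⟩
  obtain ⟨i₀, hi₀⟩ := Finite.exists_max d
  set c := w i₀ ^ 2
  set e := d i₀ - a
  have hc : 0 < c := by positivity [hw i₀]
  -- At `A` the `i₀` term alone exceeds `A - a`; at `B` every term is at most `w i ^ 2`.
  set A := d i₀ + c / (c + |e| + 1)
  set B := d i₀ + ∑ i, w i ^ 2 + |e| + 1
  have hcA : 0 < c / (c + |e| + 1) := by positivity
  have hA : ∀ i, d i < A := fun i => by linarith [hi₀ i]
  have hB : ∀ i, d i + 1 ≤ B := fun i => by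
    linarith [hi₀ i, abs_nonneg e, Finset.sum_nonneg fun i (_ : i ∈ Finset.univ) => sq_nonneg (w i)]
  have hfA : secular a d w A < 0 := by
    have hcA' : c / (c + |e| + 1) ≤ c := div_le_self hc.le (by linarith [abs_nonneg e])
    have : c / (A - d i₀) = c + |e| + 1 := by
      rw [add_sub_cancel_left, div_div_cancel₀ hc.ne']
    linarith [secular_le_sub_div (a := a) (w := w) i₀ hA, le_abs_self e]
  have hfB : 0 < secular a d w B := by
    linarith [sub_sum_sq_le_secular (a := a) (w := w) hB, neg_abs_le e]
  have hAB : A ≤ B := by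
    have : c / (c + |e| + 1) < 1 := (div_lt_one (by positivity)).2 (by linarith [abs_nonneg e])
    linarith [hB i₀]
  obtain ⟨ξ, hξ, hξ0⟩ := intermediate_value_Icc hAB
    (continuousOn_secular.mono fun μ hμ i => (hA i).trans_le hμ.1) ⟨hfA.le, hfB.le⟩
  exact ⟨ξ, fun i => (hA i).trans_le hξ.1, hξ0⟩

end Secular

section Arrow

variable {n : ℕ}

lemma arrow_mulVec_castSucc (a : Fin (n + 1) → ℂ) (b c : Fin n → ℂ) (v : Fin (n + 1) → ℂ)
    (j : Fin n) :
    (arrow a b c).mulVec v j.castSucc = a j.castSucc * v j.castSucc + b j * v (Fin.last n) := by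
  rw [mulVec, dotProduct, Fin.sum_univ_castSucc]
  simp [arrow, (Fin.castSucc_lt_last _).ne, Fin.castSucc_inj, ite_mul, Finset.sum_ite_eq]

lemma arrow_mulVec_last (a : Fin (n + 1) → ℂ) (b c : Fin n → ℂ) (v : Fin (n + 1) → ℂ) :
    (arrow a b c).mulVec v (Fin.last n)
      = ∑ j, c j * v j.castSucc + a (Fin.last n) * v (Fin.last n) := by
  rw [mulVec, dotProduct, Fin.sum_univ_castSucc]
  simp [arrow, (Fin.castSucc_lt_last _).ne']

def symmArrow (d : Fin (n + 1) → ℝ) (w : Fin n → ℝ) : Matrix (Fin (n + 1)) (Fin (n + 1)) ℂ :=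
  arrow (fun i => (d i : ℂ)) (fun j => (w j : ℂ)) (fun j => (w j : ℂ))

def arrowEigvec (d : Fin (n + 1) → ℝ) (w : Fin n → ℝ) (μ : ℝ) : Fin (n + 1) → ℝ :=
  Fin.lastCases 1 fun j => w j / (μ - d j.castSucc)

variable {d : Fin (n + 1) → ℝ} {w : Fin n → ℝ} {μ : ℝ}

lemma arrowEigvec_pos (hw : ∀ j, 0 < w j) (hμ : ∀ j : Fin n, d j.castSucc < μ) (i : Fin (n + 1)) :
    0 < arrowEigvec d w μ i := by
  induction i using Fin.lastCases with
  | last => simp [arrowEigvec]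
  | cast j => simpa [arrowEigvec] using div_pos (hw j) (sub_pos.2 (hμ j))

lemma symmArrow_mulVec_arrowEigvec (hμ : ∀ j : Fin n, d j.castSucc < μ) :
    (symmArrow d w).mulVec (fun i => (arrowEigvec d w μ i : ℂ))
      = (μ : ℂ) • (fun i => (arrowEigvec d w μ i : ℂ))
        - Pi.single (Fin.last n) (secular (d (Fin.last n)) (fun j => d j.castSucc) w μ : ℂ) := by
  have hne : ∀ j : Fin n, (μ : ℂ) - d j.castSucc ≠ 0 := fun j => by
    exact_mod_cast (sub_pos.2 (hμ j)).ne'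
  funext i
  induction i using Fin.lastCases with
  | last =>
    simp only [symmArrow, arrow_mulVec_last, arrowEigvec, Fin.lastCases_last,
      Fin.lastCases_castSucc, secular, Pi.sub_apply, Pi.smul_apply, Pi.single_eq_same, smul_eq_mul]
    push_cast
    simp only [sq, mul_div_assoc]
    ring
  | cast j =>
    simp only [symmArrow, arrow_mulVec_castSucc, arrowEigvec, Fin.lastCases_last,
      Fin.lastCases_castSucc, Pi.sub_apply, Pi.smul_apply, smul_eq_mul,
      Pi.single_eq_of_ne (Fin.castSucc_lt_last j).ne]
    push_cast
    field_simp [hne j]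
    ring

lemma eq_smul_arrowEigvec {v : Fin (n + 1) → ℂ} (hμ : ∀ j : Fin n, d j.castSucc < μ)
    (hv : (symmArrow d w).mulVec v = (μ : ℂ) • v) :
    v = v (Fin.last n) • fun i => (arrowEigvec d w μ i : ℂ) := by
  funext i
  induction i using Fin.lastCases with
  | last => simp [arrowEigvec]
  | cast j =>
    have hrow := congrFun hv j.castSucc
    rw [symmArrow, arrow_mulVec_castSucc] at hrow
    have hne : (μ : ℂ) - d j.castSucc ≠ 0 := by exact_mod_cast (sub_pos.2 (hμ j)).ne'
    simp only [arrowEigvec, Fin.lastCases_castSucc, Pi.smul_apply, smul_eq_mul] at hrow ⊢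
    push_cast
    field_simp
    linear_combination -hrow

lemma secular_eq_zero_of_mulVec_eq_smul {v : Fin (n + 1) → ℂ} (hμ : ∀ j : Fin n, d j.castSucc < μ)
    (hv0 : v ≠ 0) (hv : (symmArrow d w).mulVec v = (μ : ℂ) • v) :
    secular (d (Fin.last n)) (fun j => d j.castSucc) w μ = 0 := by
  have hx := eq_smul_arrowEigvec hμ hv
  have hlast : v (Fin.last n) ≠ 0 := fun h0 => hv0 (by rw [hx, h0, zero_smul])
  have hrow := congrFun hv (Fin.last n)
  rw [hx, mulVec_smul, symmArrow_mulVec_arrowEigvec hμ] at hrow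
  simp only [arrowEigvec, coe_smul, Pi.smul_apply, Pi.sub_apply, Fin.lastCases_last, ofReal_one,
    real_smul, mul_one, Pi.single_eq_same, smul_eq_mul] at hrow
  have hs : v (Fin.last n) * secular (d (Fin.last n)) (fun j => d j.castSucc) w μ = 0 := by
    linear_combination -hrow
  exact_mod_cast (mul_eq_zero.1 hs).resolve_left hlast

end Arrow

theorem stmt6_general {n : ℕ} (h k : Fin (n + 1) → ℝ) (m : Fin n → ℝ)
    (hm : ∀ j, 0 < m j)
    (M : ℝ → Matrix (Fin (n + 1)) (Fin (n + 1)) ℂ)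
    (hM : ∀ t, M t = arrow (fun i => ((h i + t * k i : ℝ) : ℂ))
      (fun j => ((t * m j : ℝ) : ℂ)) (fun j => ((t * m j : ℝ) : ℂ))) :
    ∀ t : ℝ, 0 < t →
      ∃ ξ : ℝ, IsGreatest {r : ℝ | (r : ℂ) ∈ eigs (M t)} ξ ∧
        (∀ j : Fin n, h j.castSucc + t * k j.castSucc < ξ) ∧
        ∃ x : Fin (n + 1) → ℝ, (∀ i, 0 < x i) ∧
          (M t).mulVec (fun i => (x i : ℂ)) = (ξ : ℂ) • (fun i => (x i : ℂ)) ∧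
          ∀ v : Fin (n + 1) → ℂ, (M t).mulVec v = (ξ : ℂ) • v →
            ∃ cc : ℂ, v = cc • (fun i => (x i : ℂ)) := by
  intro t ht
  set d : Fin (n + 1) → ℝ := fun i => h i + t * k i
  set w : Fin n → ℝ := fun j => t * m j
  have hw : ∀ j, 0 < w j := fun j => mul_pos ht (hm j)
  have hMt : M t = symmArrow d w := hM t
  obtain ⟨ξ, hξd, hξ⟩ := exists_secular_eq_zero (a := d (Fin.last n)) (d := fun j => d j.castSucc)
    fun j => (hw j).ne'
  set x := arrowEigvec d w ξ
  have heig : (M t).mulVec (fun i => (x i : ℂ)) = (ξ : ℂ) • fun i => (x i : ℂ) := by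
    rw [hMt, symmArrow_mulVec_arrowEigvec hξd, hξ, ofReal_zero, Pi.single_zero, sub_zero]
  have hx0 : (fun i => (x i : ℂ)) ≠ 0 := fun h0 => by
    simpa [x, arrowEigvec] using congrFun h0 (Fin.last n)
  refine ⟨ξ, ⟨⟨_, hx0, heig⟩, ?_⟩, hξd, x, arrowEigvec_pos hw hξd, heig,
    fun v hv => ⟨v (Fin.last n), eq_smul_arrowEigvec hξd (hMt ▸ hv)⟩⟩
  rintro r ⟨v, hv0, hv⟩
  by_contra! hr
  have hr0 := secular_eq_zero_of_mulVec_eq_smul (fun j => (hξd j).trans hr) hv0 (hMt ▸ hv)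
  exact (secular_lt_secular hξd hr).ne (hξ.trans hr0.symm)

/-- for H real diagonal and K a Hermitian arrowhead matrix with
positive arm entries (and distinct leading diagonal entries), for every t > 0
the top eigenvalue of H + tK strictly dominates the leading diagonal entries,
is simple, and has an eigenvector with all coordinates strictly positive. -/
theorem stmt6 {n : ℕ} (h k : Fin (n + 1) → ℝ) (m : Fin n → ℝ)
    (hm : ∀ j, 0 < m j)
    (hkdist : ∀ i j : Fin n, i ≠ j → k i.castSucc ≠ k j.castSucc)
    (M : ℝ → Matrix (Fin (n + 1)) (Fin (n + 1)) ℂ)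
    (hM : ∀ t, M t = arrow (fun i => ((h i + t * k i : ℝ) : ℂ))
      (fun j => ((t * m j : ℝ) : ℂ)) (fun j => ((t * m j : ℝ) : ℂ))) :
    ∀ t : ℝ, 0 < t →
      ∃ ξ : ℝ, IsGreatest {r : ℝ | (r : ℂ) ∈ eigs (M t)} ξ ∧
        (∀ j : Fin n, h j.castSucc + t * k j.castSucc < ξ) ∧
        ∃ x : Fin (n + 1) → ℝ, (∀ i, 0 < x i) ∧
          (M t).mulVec (fun i => (x i : ℂ)) = (ξ : ℂ) • (fun i => (x i : ℂ)) ∧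
          ∀ v : Fin (n + 1) → ℂ, (M t).mulVec v = (ξ : ℂ) • v →
            ∃ cc : ℂ, v = cc • (fun i => (x i : ℂ)) :=
  stmt6_general h k m hm M hM
end
end

section
/- Let A be an n×n arrowhead matrix with pairwise distinct a_1,...,a_{n-1} and |b_j| > |c_j| for all j whose diagonal entry a_j is extremal (lies on the boundary of the convex hull of a_1,...,a_{n-1}), and |b_j| ≥ |c_j| for all other j ≤ n-1. Then for every θ ∈ ℝ, the maximal eigenvalue ξ(θ) of Re(e^{iθ}A) is a simple eigenvalue and satisfies ξ(θ) > Re(a_j e^{iθ}) for all j = 1,...,n-1. -/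
open Matrix Complex

noncomputable section

/-- Re(e^{iθ}A). -/
def reRotP {n : ℕ} (θ : ℝ) (A : Matrix (Fin n) (Fin n) ℂ) :
    Matrix (Fin n) (Fin n) ℂ :=
  (2⁻¹ : ℂ) • (Complex.exp ((θ : ℂ) * Complex.I) • A +
    (Complex.exp ((θ : ℂ) * Complex.I) • A)ᴴ)

open ComplexConjugate
open scoped ComplexOrder

/-!
The rotated Hermitian part `B = Re(e^{iθ} A)` of an arrowhead matrix is again an arrowhead
matrix, with diagonal `Re(a_j e^{iθ})`, and its top eigenvalue `ξ` is the supremum of the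
Rayleigh quotient. An index `k` maximising `Re(a_j e^{iθ})` gives an extreme point `a_k` of the
convex hull, so `|c_k| < |b_k|` and the arm entry `B_{k,n}` is nonzero; a test vector supported
on `{k, n}` then lifts the Rayleigh quotient strictly above `B_{kk}`, so `ξ > Re(a_j e^{iθ})` for
every `j < n`. Since `ξ` then differs from every `B_{jj}`, `j < n`, an eigenvector for `ξ` is
determined by its last coordinate, and `ξ` is simple.
-/

theorem LinearMap.IsSymmetric.exists_hasEigenvalue_forall_re_inner_le {𝕜 E : Type*} [RCLike 𝕜]
    [NormedAddCommGroup E] [InnerProductSpace 𝕜 E] [FiniteDimensional 𝕜 E] [Nontrivial E]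
    {T : E →ₗ[𝕜] E} (hT : T.IsSymmetric) :
    ∃ ξ : ℝ, Module.End.HasEigenvalue T ξ ∧ ∀ x, RCLike.re (inner 𝕜 (T x) x) ≤ ξ * ‖x‖ ^ 2 := by
  refine ⟨_, hT.hasEigenvalue_iSup_of_finiteDimensional, fun x => ?_⟩
  rcases eq_or_ne x 0 with rfl | hx
  · simp
  have hbdd : BddAbove (Set.range fun y : {y : E // y ≠ 0} =>
      RCLike.re (inner 𝕜 (T y) (y : E)) / ‖(y : E)‖ ^ 2) := by
    refine ⟨‖LinearMap.toContinuousLinearMap T‖, ?_⟩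
    rintro _ ⟨y, rfl⟩
    exact (le_abs_self _).trans ((LinearMap.toContinuousLinearMap T).rayleighQuotient_le_norm y)
  rw [← div_le_iff₀ (by positivity)]
  exact le_ciSup hbdd ⟨x, hx⟩

theorem mem_eigs_iff_hasEigenvalue {m : ℕ} {M : Matrix (Fin m) (Fin m) ℂ} {μ : ℂ} :
    μ ∈ eigs M ↔ Module.End.HasEigenvalue (toLin' M) μ := by
  simp only [eigs, Set.mem_ofPred_eq, Module.End.hasEigenvalue_iff, Submodule.ne_bot_iff,
    Module.End.mem_eigenspace_iff, toLin'_apply]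
  tauto

theorem Matrix.IsHermitian.exists_isGreatest_eigs {m : ℕ} [NeZero m]
    {M : Matrix (Fin m) (Fin m) ℂ} (hM : M.IsHermitian) :
    ∃ ξ : ℝ, IsGreatest {r : ℝ | (r : ℂ) ∈ eigs M} ξ ∧
      ∀ v, (star v ⬝ᵥ M *ᵥ v).re ≤ ξ * (star v ⬝ᵥ v).re := by
  obtain ⟨ξ, hξ, hle⟩ :=
    (isSymmetric_toEuclideanLin_iff.mpr hM).exists_hasEigenvalue_forall_re_inner_le
  have hray : ∀ v, (star v ⬝ᵥ M *ᵥ v).re ≤ ξ * (star v ⬝ᵥ v).re := by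
    intro v
    have h := hle (WithLp.toLp 2 v)
    rw [inner_re_symm, @norm_sq_eq_re_inner ℂ, EuclideanSpace.inner_eq_star_dotProduct,
      EuclideanSpace.inner_eq_star_dotProduct, toLpLin_apply] at h
    simpa [dotProduct_comm] using h
  refine ⟨ξ, ⟨?_, ?_⟩, hray⟩
  · obtain ⟨x, hx⟩ := hξ.exists_hasEigenvector
    refine ⟨x.ofLp, by simpa using hx.2, ?_⟩
    simpa [toLpLin_apply] using congrArg WithLp.ofLp hx.apply_eq_smul
  · rintro r ⟨v, hv0, hv⟩
    have hpos := (Complex.pos_iff.mp (dotProduct_star_self_pos_iff.mpr hv0)).1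
    have h := hray v
    rw [hv, dotProduct_smul, smul_eq_mul, re_ofReal_mul] at h
    exact le_of_mul_le_mul_right h hpos

theorem Matrix.IsHermitian.re_apply_self_lt {ι : Type*} [Fintype ι] [DecidableEq ι]
    {M : Matrix ι ι ℂ} (hM : M.IsHermitian) {ξ : ℝ}
    (hray : ∀ v, (star v ⬝ᵥ M *ᵥ v).re ≤ ξ * (star v ⬝ᵥ v).re)
    {j k : ι} (hjk : j ≠ k) (hjk0 : M j k ≠ 0) : (M j j).re < ξ := by
  have hβ : 0 < normSq (M j k) := normSq_pos.mpr hjk0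
  -- The Rayleigh quotient of `e_j + t • conj (M j k) • e_k` exceeds `M j j` once
  -- `t * |M k k - ξ| < 1`.
  set t : ℝ := (|(M k k).re - ξ| + 1)⁻¹
  have ht : 0 < t := by positivity
  have htκ : 0 < 1 + t * ((M k k).re - ξ) := by
    have : t * (|(M k k).re - ξ| + 1) = 1 := inv_mul_cancel₀ (by positivity)
    nlinarith [neg_abs_le ((M k k).re - ξ)]
  have hkj : M k j = conj (M j k) := (hM.apply k j).symm
  have hkk : (M k k).im = 0 := by simpa using (congrArg im (hM.coe_re_apply_self k)).symm
  set v : ι → ℂ := Pi.single j 1 + Pi.single k (t * conj (M j k))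
  have hquad : (star v ⬝ᵥ M *ᵥ v).re
      = (M j j).re + 2 * t * normSq (M j k) + t ^ 2 * normSq (M j k) * (M k k).re := by
    simp only [v, star_add, Pi.star_single, star_one, star_mul', RCLike.star_def, conj_ofReal,
      RingHomCompTriple.comp_apply, RingHom.id_apply, mulVec_add, mulVec_single, MulOpposite.op_one,
      one_smul, MulOpposite.op_mul, dotProduct_add, add_dotProduct, single_dotProduct, col_apply,
      one_mul, hkj, dotProduct_smul, smul_add, MulOpposite.smul_eq_mul_unop, MulOpposite.unop_mul,
      MulOpposite.unop_op, add_re, mul_re, ofReal_re, ofReal_im, zero_mul, sub_zero, conj_re,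
      mul_im, add_zero, conj_im, mul_neg, sub_neg_eq_add, neg_zero, hkk, mul_zero, zero_add,
      normSq_apply]
    ring
  have hnorm : (star v ⬝ᵥ v).re = 1 + t ^ 2 * normSq (M j k) := by
    simp only [v, star_add, Pi.star_single, star_one, star_mul', RCLike.star_def, conj_ofReal,
      RingHomCompTriple.comp_apply, RingHom.id_apply, dotProduct_add, dotProduct_single,
      Pi.add_apply, Pi.single_eq_same, ne_eq, hjk, not_false_eq_true, Pi.single_eq_of_ne, add_zero,
      mul_one, hjk.symm, zero_add, add_re, one_re, mul_re, ofReal_re, ofReal_im, zero_mul, sub_zero,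
      conj_re, conj_im, mul_neg, neg_zero, mul_im, sub_neg_eq_add, normSq_apply]
    ring
  have h := hray v
  rw [hquad, hnorm] at h
  nlinarith [mul_pos (mul_pos ht hβ) htκ]

theorem Matrix.finrank_eigenspace_le_one_of_arrowhead {K : Type*} [Field K] {m : ℕ}
    (M : Matrix (Fin (m + 1)) (Fin (m + 1)) K)
    (hM : ∀ i j : Fin m, i ≠ j → M i.castSucc j.castSucc = 0) {μ : K}
    (hμ : ∀ j : Fin m, M j.castSucc j.castSucc ≠ μ) :
    Module.finrank K (Module.End.eigenspace (toLin' M) μ) ≤ 1 := by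
  have hinj : Function.Injective
      ((LinearMap.proj (Fin.last m)).comp (Module.End.eigenspace (toLin' M) μ).subtype) := by
    rw [← LinearMap.ker_eq_bot, eq_bot_iff]
    rintro ⟨x, hx⟩ (hlast : x (Fin.last m) = 0)
    rw [Module.End.mem_eigenspace_iff, toLin'_apply] at hx
    have hrow : ∀ j : Fin m, x j.castSucc = 0 := by
      intro j
      have h := congrFun hx j.castSucc
      rw [mulVec, dotProduct, Fin.sum_univ_castSucc, hlast, mul_zero, add_zero,
        Finset.sum_eq_single j (fun k _ hk => by rw [hM j k hk.symm, zero_mul]) (by simp)] at h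
      by_contra hne
      exact hμ j (mul_right_cancel₀ hne h)
    simpa [Submodule.mem_bot] using funext fun i => Fin.lastCases hlast hrow i
  simpa using LinearMap.finrank_le_finrank_of_injective hinj

theorem mem_frontier_convexHull_of_isMaxOn {E : Type*} [NormedAddCommGroup E] [NormedSpace ℝ E]
    {s : Set E} {f : StrongDual ℝ E} (hf : f ≠ 0) {x : E} (hx : x ∈ s) (hmax : IsMaxOn f s x) :
    x ∈ frontier (convexHull ℝ s) := by
  have hmax_hull : IsMaxOn f (convexHull ℝ s) x :=
    convexHull_min hmax (convex_halfSpace_le f.toLinearMap.isLinear (f x))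
  refine ⟨subset_closure (subset_convexHull ℝ s hx), fun hint => hf ?_⟩
  exact (hmax_hull.isLocalMax (mem_interior_iff_mem_nhds.mp hint)).hasFDerivAt_eq_zero
    f.hasFDerivAt

theorem Complex.mem_frontier_convexHull_of_forall_re_mul_le {ι : Type*} {g : ι → ℂ} {e : ℂ}
    (he : e ≠ 0) {k : ι} (hk : ∀ i, (g i * e).re ≤ (g k * e).re) :
    g k ∈ frontier (convexHull ℝ (Set.range g)) := by
  set f : StrongDual ℝ ℂ := reCLM.comp ((ContinuousLinearMap.mul ℝ ℂ).flip e)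
  have hf : f ≠ 0 := fun h => by
    have h' := DFunLike.congr_fun h (conj e)
    simp only [f, ContinuousLinearMap.comp_apply, ContinuousLinearMap.flip_apply,
      ContinuousLinearMap.mul_apply', ← normSq_eq_conj_mul_self, reCLM_apply, ofReal_re,
      _root_.zero_apply, map_eq_zero] at h'
    exact he h'
  exact mem_frontier_convexHull_of_isMaxOn hf (Set.mem_range_self k) <| by
    rintro _ ⟨i, rfl⟩
    simpa only [f, ContinuousLinearMap.comp_apply, ContinuousLinearMap.flip_apply,
      ContinuousLinearMap.mul_apply', reCLM_apply, Set.mem_ofPred_eq] using hk i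

section reRotP

variable {m : ℕ} (θ : ℝ) (A : Matrix (Fin m) (Fin m) ℂ)

theorem reRotP_apply (i j : Fin m) :
    reRotP θ A i j = 2⁻¹ * (exp (θ * I) * A i j + conj (exp (θ * I) * A j i)) := by
  simp [reRotP, mul_add]

theorem re_reRotP_apply_self (i : Fin m) : (reRotP θ A i i).re = (A i i * exp (θ * I)).re := by
  rw [reRotP_apply, mul_comm (A i i)]
  simp only [mul_re, add_re, conj_re, inv_re, re_ofNat, normSq_ofNat, inv_im, im_ofNat, add_im,
    conj_im]
  ring

theorem reRotP_apply_eq_zero {i j : Fin m} (hij : A i j = 0) (hji : A j i = 0) :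
    reRotP θ A i j = 0 := by
  simp [reRotP_apply, hij, hji]

theorem reRotP_apply_ne_zero {i j : Fin m} (h : ‖A j i‖ < ‖A i j‖) : reRotP θ A i j ≠ 0 := by
  rw [reRotP_apply, mul_ne_zero_iff, ← sub_neg_eq_add, sub_ne_zero]
  refine ⟨by norm_num, fun heq => h.ne' ?_⟩
  simpa [norm_exp_ofReal_mul_I] using congrArg norm heq

theorem isHermitian_reRotP : (reRotP θ A).IsHermitian :=
  (isHermitian_add_transpose_self _).smul (by simp [IsSelfAdjoint])

end reRotP

section arrow

variable {n : ℕ} (a : Fin (n + 1) → ℂ) (b c : Fin n → ℂ)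

theorem arrow_apply_self (i : Fin (n + 1)) : arrow a b c i i = a i := by
  simp [arrow]

theorem arrow_apply_castSucc_last (j : Fin n) : arrow a b c j.castSucc (Fin.last n) = b j := by
  simp [arrow, (Fin.castSucc_lt_last j).ne]

theorem arrow_apply_last_castSucc (j : Fin n) : arrow a b c (Fin.last n) j.castSucc = c j := by
  simp [arrow, (Fin.castSucc_lt_last j).ne']

theorem arrow_apply_castSucc_castSucc {i j : Fin n} (hij : i ≠ j) :
    arrow a b c i.castSucc j.castSucc = 0 := by
  simp [arrow, hij, (Fin.castSucc_lt_last i).ne, (Fin.castSucc_lt_last j).ne]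

end arrow

theorem stmt9_general {n : ℕ} (a : Fin (n + 1) → ℂ) (b c : Fin n → ℂ)
    (A : Matrix (Fin (n + 1)) (Fin (n + 1)) ℂ) (hA : A = arrow a b c)
    (hstrict : ∀ j : Fin n,
      a j.castSucc ∈
        frontier (convexHull ℝ (Set.range fun i : Fin n => a i.castSucc)) →
      ‖c j‖ < ‖b j‖) :
    ∀ θ : ℝ, ∃ ξ : ℝ,
      IsGreatest {r : ℝ | (r : ℂ) ∈ eigs (reRotP θ A)} ξ ∧
      (∀ j : Fin n,
        (a j.castSucc * Complex.exp ((θ : ℂ) * Complex.I)).re < ξ) ∧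
      Module.finrank ℂ
        (Module.End.eigenspace (Matrix.toLin' (reRotP θ A)) (ξ : ℂ)) = 1 := by
  intro θ
  subst hA
  set B := reRotP θ (arrow a b c)
  have hdiag (i : Fin (n + 1)) : (B i i).re = (a i * exp (θ * I)).re := by
    rw [re_reRotP_apply_self, arrow_apply_self]
  obtain ⟨ξ, hξ, hray⟩ := (isHermitian_reRotP θ (arrow a b c)).exists_isGreatest_eigs
  have hlt (j : Fin n) : (B j.castSucc j.castSucc).re < ξ := by
    have : Nonempty (Fin n) := ⟨j⟩
    obtain ⟨k, hk⟩ := Finite.exists_max fun i : Fin n => (a i.castSucc * exp (θ * I)).re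
    have hk_front := mem_frontier_convexHull_of_forall_re_mul_le (exp_ne_zero _) hk
    have hk_arm : B k.castSucc (Fin.last n) ≠ 0 := reRotP_apply_ne_zero θ _ <| by
      rw [arrow_apply_last_castSucc, arrow_apply_castSucc_last]
      exact hstrict k hk_front
    have hk_lt := (isHermitian_reRotP θ _).re_apply_self_lt hray (Fin.castSucc_lt_last k).ne hk_arm
    rw [hdiag] at hk_lt ⊢
    exact (hk j).trans_lt hk_lt
  refine ⟨ξ, hξ, fun j => hdiag j.castSucc ▸ hlt j, le_antisymm ?_ ?_⟩
  · refine finrank_eigenspace_le_one_of_arrowhead B (fun i j hij => ?_) fun j h => ?_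
    · exact reRotP_apply_eq_zero θ _ (arrow_apply_castSucc_castSucc a b c hij)
        (arrow_apply_castSucc_castSucc a b c hij.symm)
    · exact (hlt j).ne (by simp [h])
  · exact Submodule.one_le_finrank_iff.mpr
      (Module.End.hasEigenvalue_iff.mp (mem_eigs_iff_hasEigenvalue.mp hξ.1))

/-- under the "unbalanced arms" hypotheses, for every θ the top
eigenvalue of Re(e^{iθ}A) is simple and strictly exceeds Re(a_j e^{iθ}) for
j = 1,…,n-1. -/
theorem stmt9 {n : ℕ} (a : Fin (n + 1) → ℂ) (b c : Fin n → ℂ)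
    (A : Matrix (Fin (n + 1)) (Fin (n + 1)) ℂ) (hA : A = arrow a b c)
    (hdist : ∀ i j : Fin n, i ≠ j → a i.castSucc ≠ a j.castSucc)
    (hge : ∀ j : Fin n, ‖c j‖ ≤ ‖b j‖)
    (hstrict : ∀ j : Fin n,
      a j.castSucc ∈
        frontier (convexHull ℝ (Set.range fun i : Fin n => a i.castSucc)) →
      ‖c j‖ < ‖b j‖) :
    ∀ θ : ℝ, ∃ ξ : ℝ,
      IsGreatest {r : ℝ | (r : ℂ) ∈ eigs (reRotP θ A)} ξ ∧
      (∀ j : Fin n,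
        (a j.castSucc * Complex.exp ((θ : ℂ) * Complex.I)).re < ξ) ∧
      Module.finrank ℂ
        (Module.End.eigenspace (Matrix.toLin' (reRotP θ A)) (ξ : ℂ)) = 1 :=
  stmt9_general a b c A hA hstrict
end
end

section
/- Let K be the Hermitian matrix [[K₁, Σ],[Σ, K₂]] where K₁, K₂ are 2×2 Hermitian and Σ = diag[σ₁, σ₂] with σ₁ = σ₂ > 0. If K₁ and K₂ do not commute, then the matrix A = H + iK, where H = diag[h₁,h₁,h₂,h₂] with h₁ ≠ h₂, has no 2-dimensional subspace of ℂ⁴ that is invariant under both A and A*. -/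
/-!
Since `A + Aᴴ = 2H` and `A - Aᴴ = 2iK`, a reducing subspace `L` of `A` is invariant under `H` and
`K`. Because `h₁ ≠ h₂`, invariance under `H` splits `L = S₁ × S₂` along `ℂ⁴ = ℂ² × ℂ²`, and the
off-diagonal blocks `σ • 1` of `K` force `S₁ = S₂ =: S`, invariant under `K₁` and `K₂`. If `L` is
a plane, `S` is a line, i.e. a common eigenvector of `K₁` and `K₂`. For `2 × 2` Hermitian
matrices this forces `K₁ K₂ = K₂ K₁`: their commutator `C` is skew-Hermitian, traceless and
singular, so `Cᴴ C = -C² = 0` by Cayley–Hamilton.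
-/

open Matrix Complex

namespace Matrix

section TwoByTwo

variable {R : Type*} [CommRing R]

theorem mul_self_eq_zero_of_trace_eq_zero_of_det_eq_zero {C : Matrix (Fin 2) (Fin 2) R}
    (htr : C.trace = 0) (hdet : C.det = 0) : C * C = 0 := by
  rw [trace_fin_two] at htr
  rw [det_fin_two] at hdet
  ext i j
  fin_cases i <;> fin_cases j <;>
    simp only [Fin.zero_eta, Fin.mk_one, Fin.isValue, mul_apply, Fin.sum_univ_two, zero_apply]
  · linear_combination C 0 0 * htr - hdet
  · linear_combination C 0 1 * htr
  · linear_combination C 1 0 * htr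
  · linear_combination C 1 1 * htr - hdet

section StarOrdered

variable [PartialOrder R] [StarRing R] [StarOrderedRing R]

theorem eq_zero_of_conjTranspose_eq_neg_of_trace_eq_zero_of_det_eq_zero [NoZeroDivisors R]
    {C : Matrix (Fin 2) (Fin 2) R} (hC : Cᴴ = -C) (htr : C.trace = 0) (hdet : C.det = 0) :
    C = 0 := by
  rw [← conjTranspose_mul_self_eq_zero, hC, neg_mul,
    mul_self_eq_zero_of_trace_eq_zero_of_det_eq_zero htr hdet, neg_zero]

theorem commute_of_isHermitian_of_mulVec_eq_smul [IsDomain R]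
    {M N : Matrix (Fin 2) (Fin 2) R} (hM : M.IsHermitian) (hN : N.IsHermitian)
    {x : Fin 2 → R} (hx : x ≠ 0) {a b : R} (hMx : M *ᵥ x = a • x) (hNx : N *ᵥ x = b • x) :
    Commute M N := by
  rw [commute_iff_eq, ← sub_eq_zero]
  apply eq_zero_of_conjTranspose_eq_neg_of_trace_eq_zero_of_det_eq_zero
  · rw [conjTranspose_sub, conjTranspose_mul, conjTranspose_mul, hM.eq, hN.eq, neg_sub]
  · rw [trace_sub, trace_mul_comm, sub_self]
  · refine exists_mulVec_eq_zero_iff.mp ⟨x, hx, ?_⟩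
    rw [sub_mulVec, ← mulVec_mulVec, ← mulVec_mulVec, hMx, hNx, mulVec_smul, mulVec_smul, hMx,
      hNx, smul_smul, smul_smul, mul_comm, sub_self]

end StarOrdered

end TwoByTwo

theorem mulVec_mem_of_mulVec_add_I_smul_mem {n : Type*} [Fintype n] {H K : Matrix n n ℂ}
    (hH : H.IsHermitian) (hK : K.IsHermitian) {L : Submodule ℂ (n → ℂ)}
    (hA : ∀ v ∈ L, (H + I • K) *ᵥ v ∈ L) (hA' : ∀ v ∈ L, (H + I • K)ᴴ *ᵥ v ∈ L) :
    (∀ v ∈ L, H *ᵥ v ∈ L) ∧ (∀ v ∈ L, K *ᵥ v ∈ L) := by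
  have hAc : (H + I • K)ᴴ = H - I • K := by
    rw [conjTranspose_add, conjTranspose_smul, hH.eq, hK.eq, star_def, conj_I, neg_smul,
      sub_eq_add_neg]
  refine ⟨fun v hv => ?_, fun v hv => ?_⟩
  · have hHA : H = (2 : ℂ)⁻¹ • ((H + I • K) + (H + I • K)ᴴ) := by
      rw [hAc]; module
    rw [hHA, smul_mulVec, add_mulVec]
    exact L.smul_mem _ (L.add_mem (hA v hv) (hA' v hv))
  · have hKA : K = (2 * I)⁻¹ • ((H + I • K) - (H + I • K)ᴴ) := by
      rw [hAc, add_sub_sub_cancel, ← two_smul ℂ, smul_smul, smul_smul, mul_assoc,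
        inv_mul_cancel₀ (by simp), one_smul]
    rw [hKA, smul_mulVec, sub_mulVec]
    exact L.smul_mem _ (L.sub_mem (hA v hv) (hA' v hv))

section Blocks

variable {R m n o : Type*} [CommRing R]

variable (R) in
def blockLinearEquiv (e : m ⊕ n ≃ o) :
    ((m → R) × (n → R)) ≃ₗ[R] (o → R) :=
  (LinearEquiv.sumArrowLequivProdArrow m n R R).symm ≪≫ₗ LinearEquiv.funCongrLeft R R e.symm

variable [Fintype m] [Fintype n] [Fintype o]

theorem reindex_fromBlocks_mulVec_blockLinearEquiv (e : m ⊕ n ≃ o) (A : Matrix m m R)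
    (B : Matrix m n R) (C : Matrix n m R) (D : Matrix n n R) (p : (m → R) × (n → R)) :
    reindex e e (fromBlocks A B C D) *ᵥ blockLinearEquiv R e p =
      blockLinearEquiv R e (A *ᵥ p.1 + B *ᵥ p.2, C *ᵥ p.1 + D *ᵥ p.2) := by
  obtain ⟨x, y⟩ := p
  ext i
  obtain ⟨j | j, rfl⟩ := e.surjective i <;>
    simp [blockLinearEquiv, reindex_apply, submatrix_mulVec_equiv, fromBlocks_mulVec,
      Function.comp_def, LinearMap.funLeft_apply]

theorem mapsTo_comap_blockLinearEquiv {e : m ⊕ n ≃ o} {A : Matrix m m R} {B : Matrix m n R}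
    {C : Matrix n m R} {D : Matrix n n R} {L : Submodule R (o → R)}
    (hL : ∀ v ∈ L, reindex e e (fromBlocks A B C D) *ᵥ v ∈ L) :
    ∀ p ∈ L.comap (blockLinearEquiv R e).toLinearMap,
      (A *ᵥ p.1 + B *ᵥ p.2, C *ᵥ p.1 + D *ᵥ p.2) ∈ L.comap (blockLinearEquiv R e).toLinearMap :=
  fun p hp => by
    simpa only [Submodule.mem_comap, LinearEquiv.coe_coe,
      reindex_fromBlocks_mulVec_blockLinearEquiv] using hL _ hp

end Blocks

end Matrix

namespace Submodule

variable {k V W : Type*} [Field k] [AddCommGroup V] [Module k V] [AddCommGroup W] [Module k W]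

theorem eq_prod_of_smul_prodMap_mem {L : Submodule k (V × W)} {a b : k} (hab : a ≠ b)
    (hL : ∀ p ∈ L, (a • p.1, b • p.2) ∈ L) :
    L = (L.comap (LinearMap.inl k V W)).prod (L.comap (LinearMap.inr k V W)) := by
  ext ⟨x, y⟩
  have hx : (x, y) ∈ L → (x, (0 : W)) ∈ L := fun h => by
    have hsub : (x, (0 : W)) = (a - b)⁻¹ • ((a • x, b • y) - b • (x, y)) := by
      rw [Prod.smul_mk, Prod.mk_sub_mk, Prod.smul_mk, sub_self, ← sub_smul, smul_smul,
        inv_mul_cancel₀ (sub_ne_zero.mpr hab), one_smul, smul_zero]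
    rw [hsub]
    exact L.smul_mem _ (L.sub_mem (hL _ h) (L.smul_mem _ h))
  simp only [mem_prod, mem_comap, LinearMap.inl_apply, LinearMap.inr_apply]
  refine ⟨fun h => ⟨hx h, ?_⟩, fun ⟨h₁, h₂⟩ => ?_⟩
  · simpa using L.sub_mem h (hx h)
  · simpa using L.add_mem h₁ h₂

theorem finrank_prod (S : Submodule k V) (T : Submodule k W) [FiniteDimensional k S]
    [FiniteDimensional k T] :
    Module.finrank k (S.prod T) = Module.finrank k S + Module.finrank k T := by
  conv_lhs => rw [← S.range_subtype, ← T.range_subtype, ← LinearMap.range_prodMap]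
  rw [LinearMap.finrank_range_of_inj, Module.finrank_prod]
  exact Prod.map_injective.mpr ⟨S.injective_subtype, T.injective_subtype⟩

theorem eq_and_mapsTo_of_prod_coupled {S₁ S₂ : Submodule k V} {T₁ T₂ : V →ₗ[k] V} {c : k}
    (hc : c ≠ 0)
    (hT : ∀ p ∈ S₁.prod S₂, (T₁ p.1 + c • p.2, c • p.1 + T₂ p.2) ∈ S₁.prod S₂) :
    S₁ = S₂ ∧ (∀ x ∈ S₁, T₁ x ∈ S₁) ∧ (∀ y ∈ S₂, T₂ y ∈ S₂) := by
  have h₁ : ∀ x ∈ S₁, T₁ x ∈ S₁ ∧ x ∈ S₂ := fun x hx => by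
    have := hT (x, 0) ⟨hx, S₂.zero_mem⟩
    simp only [smul_zero, add_zero, map_zero] at this
    exact ⟨this.1, (S₂.smul_mem_iff hc).mp this.2⟩
  have h₂ : ∀ y ∈ S₂, T₂ y ∈ S₂ ∧ y ∈ S₁ := fun y hy => by
    have := hT (0, y) ⟨S₁.zero_mem, hy⟩
    simp only [smul_zero, map_zero, zero_add] at this
    exact ⟨this.2, (S₁.smul_mem_iff hc).mp this.1⟩
  exact ⟨le_antisymm (fun x hx => (h₁ x hx).2) (fun y hy => (h₂ y hy).2),
    fun x hx => (h₁ x hx).1, fun y hy => (h₂ y hy).1⟩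

theorem exists_eq_prod_self_of_mapsTo {L : Submodule k (V × V)} {a b c : k} {T₁ T₂ : V →ₗ[k] V}
    (hab : a ≠ b) (hc : c ≠ 0) (hD : ∀ p ∈ L, (a • p.1, b • p.2) ∈ L)
    (hT : ∀ p ∈ L, (T₁ p.1 + c • p.2, c • p.1 + T₂ p.2) ∈ L) :
    ∃ S : Submodule k V, L = S.prod S ∧ (∀ x ∈ S, T₁ x ∈ S) ∧ (∀ x ∈ S, T₂ x ∈ S) := by
  have hL := eq_prod_of_smul_prodMap_mem hab hD
  rw [hL] at hT
  obtain ⟨hS, hT₁, hT₂⟩ := eq_and_mapsTo_of_prod_coupled hc hT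
  exact ⟨_, hL.trans (congrArg _ hS.symm), hT₁, hS ▸ hT₂⟩

theorem exists_common_eigenvector_of_finrank_eq_one {S : Submodule k V}
    (hS : Module.finrank k S = 1) {T₁ T₂ : V → V} (hT₁ : ∀ x ∈ S, T₁ x ∈ S)
    (hT₂ : ∀ x ∈ S, T₂ x ∈ S) : ∃ x ≠ 0, ∃ a b : k, T₁ x = a • x ∧ T₂ x = b • x := by
  obtain ⟨⟨x, hxS⟩, hx, hspan⟩ := finrank_eq_one_iff'.mp hS
  obtain ⟨a, ha⟩ := hspan ⟨T₁ x, hT₁ x hxS⟩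
  obtain ⟨b, hb⟩ := hspan ⟨T₂ x, hT₂ x hxS⟩
  exact ⟨x, fun h => hx (by simp [h]), a, b, (congrArg Subtype.val ha).symm,
    (congrArg Subtype.val hb).symm⟩

end Submodule

open scoped ComplexOrder

/-- for H = diag[h₁,h₁,h₂,h₂] (h₁ ≠ h₂) and
K = [[K₁, σI],[σI, K₂]] with σ > 0 and K₁, K₂ non-commuting 2×2 Hermitian
blocks, the matrix A = H + iK has no 2-dimensional reducing subspace. -/
theorem stmt11 (h₁ h₂ : ℝ) (hne : h₁ ≠ h₂) (σ : ℝ) (hσ : 0 < σ)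
    (K₁ K₂ : Matrix (Fin 2) (Fin 2) ℂ)
    (hK₁ : K₁ᴴ = K₁) (hK₂ : K₂ᴴ = K₂)
    (hcomm : K₁ * K₂ ≠ K₂ * K₁)
    (H K A : Matrix (Fin 4) (Fin 4) ℂ)
    (hH : H = Matrix.diagonal ![(h₁ : ℂ), (h₁ : ℂ), (h₂ : ℂ), (h₂ : ℂ)])
    (hK : K = Matrix.reindex finSumFinEquiv finSumFinEquiv
      (Matrix.fromBlocks K₁ ((σ : ℂ) • 1) ((σ : ℂ) • 1) K₂))
    (hA : A = H + Complex.I • K) :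
    ¬∃ L : Submodule ℂ (Fin 4 → ℂ), Module.finrank ℂ L = 2 ∧
      (∀ v ∈ L, A.mulVec v ∈ L) ∧ (∀ v ∈ L, Aᴴ.mulVec v ∈ L) := by
  rintro ⟨L, hdim, hAL, hAstarL⟩
  have hHblocks : H = reindex finSumFinEquiv finSumFinEquiv
      (fromBlocks ((h₁ : ℂ) • (1 : Matrix (Fin 2) (Fin 2) ℂ)) 0 0
        ((h₂ : ℂ) • (1 : Matrix (Fin 2) (Fin 2) ℂ))) := by
    rw [hH, smul_one_eq_diagonal, smul_one_eq_diagonal, fromBlocks_diagonal, reindex_apply,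
      submatrix_diagonal_equiv]
    congr 1
    funext i
    fin_cases i <;> rfl
  have hreal : ∀ r : ℝ, ((r : ℂ) • (1 : Matrix (Fin 2) (Fin 2) ℂ)).IsHermitian := fun r =>
    isHermitian_one.smul (by simp [IsSelfAdjoint, conj_ofReal])
  obtain ⟨hHL, hKL⟩ := mulVec_mem_of_mulVec_add_I_smul_mem
    (hHblocks ▸ ((hreal h₁).fromBlocks (by simp) (hreal h₂)).reindex _)
    (hK ▸ (IsHermitian.fromBlocks hK₁ (hreal σ).eq hK₂).reindex _) (hA ▸ hAL) (hA ▸ hAstarL)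
  rw [hHblocks] at hHL
  rw [hK] at hKL
  obtain ⟨S, hLS, hS₁, hS₂⟩ := Submodule.exists_eq_prod_self_of_mapsTo
    (T₁ := K₁.mulVecLin) (T₂ := K₂.mulVecLin) (ofReal_injective.ne hne) (ofReal_ne_zero.mpr hσ.ne')
    (fun p hp => by simpa only [smul_mulVec, one_mulVec, zero_mulVec, add_zero, zero_add] using
      mapsTo_comap_blockLinearEquiv hHL p hp)
    (fun p hp => by simpa only [smul_mulVec, one_mulVec, mulVecLin_apply] using
      mapsTo_comap_blockLinearEquiv hKL p hp)
  have hS : Module.finrank ℂ S = 1 := by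
    have := (blockLinearEquiv ℂ (finSumFinEquiv (m := 2) (n := 2))).symm.finrank_map_eq L
    rw [← Submodule.comap_equiv_eq_map_symm, hLS, Submodule.finrank_prod, hdim] at this
    omega
  obtain ⟨x, hx, a, b, ha, hb⟩ := Submodule.exists_common_eigenvector_of_finrank_eq_one hS hS₁ hS₂
  exact hcomm (commute_of_isHermitian_of_mulVec_eq_smul hK₁ hK₂ hx ha hb).eq
end

section
/- Let H = diag[h₁,h₁,h₂,h₂] with h₁ ≠ h₂ real, and K = [[K₁, Σ],[Σ, K₂]] Hermitian with Σ = diag[σ₁, σ₂], σ₁ > σ₂ ≥ 0. Suppose L is a subspace of ℂ⁴ invariant under both H and K. If σ₂ = 0 and the off-diagonal entries (K₁)₁₂ and (K₂)₁₂ are both nonzero, then L = {0} or L = ℂ⁴. -/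
/-!
The matrices `A` with `A *ᵥ L ⊆ L` form a subalgebra `S` of `M₄(ℂ)`, and it suffices that `S`
contains every matrix unit `Eᵢⱼ`. Since `h₁ ≠ h₂`, `S` contains the spectral projections
`P = E₀₀ + E₁₁` and `Q = E₂₂ + E₃₃` of `H`. Because `σ₂ = 0`, the compressions `P K Q` and `Q K P`
are `σ₁ E₀₂` and `σ₁ E₂₀`; their products split off `E₀₀` from `P` and `E₂₂` from `Q`, giving all
diagonal units. Then `Eᵢᵢ K Eⱼⱼ = Kᵢⱼ Eᵢⱼ`, and the nonzero entries of `K` at `01`, `02`, `23` and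
their transposes (`K₁`, `K₂` are Hermitian) connect all four indices.
-/

open Matrix

namespace Submodule

variable {R n : Type*} [CommSemiring R] [Fintype n] [DecidableEq n]

def matrixStabilizer (L : Submodule R (n → R)) : Subalgebra R (Matrix n n R) where
  carrier := {A | ∀ v ∈ L, A *ᵥ v ∈ L}
  mul_mem' hA hB v hv := by
    rw [← mulVec_mulVec]
    exact hA _ (hB v hv)
  add_mem' hA hB v hv := by
    rw [add_mulVec]
    exact L.add_mem (hA v hv) (hB v hv)
  algebraMap_mem' c v hv := by
    rw [Algebra.algebraMap_eq_smul_one, smul_mulVec, one_mulVec]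
    exact L.smul_mem c hv

end Submodule

section MatrixUnits

variable {𝕜 n : Type*} [Field 𝕜] [Fintype n] [DecidableEq n]
  {S : Subalgebra 𝕜 (Matrix n n 𝕜)}

theorem single_one_mem_of_single_mem {i j : n} {c : 𝕜} (hc : c ≠ 0)
    (h : single i j c ∈ S) : single i j 1 ∈ S := by
  simpa [smul_single, hc] using S.smul_mem h c⁻¹

theorem single_mem_of_apply_ne_zero {A : Matrix n n 𝕜} {i j : n} (hA : A ∈ S)
    (hi : single i i 1 ∈ S) (hj : single j j 1 ∈ S) (hAij : A i j ≠ 0) :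
    single i j 1 ∈ S := by
  refine single_one_mem_of_single_mem hAij ?_
  simpa using S.mul_mem (S.mul_mem hi hA) hj

theorem Submodule.eq_bot_or_eq_top_of_forall_single_mem_matrixStabilizer
    {L : Submodule 𝕜 (n → 𝕜)} (h : ∀ i j, single i j 1 ∈ L.matrixStabilizer) :
    L = ⊥ ∨ L = ⊤ := by
  refine or_iff_not_imp_left.2 fun hL => ?_
  obtain ⟨v, hvL, hv⟩ := L.exists_mem_ne_zero_of_ne_bot hL
  obtain ⟨k, hk⟩ := Function.ne_iff.1 hv
  have hbasis : ∀ i, Pi.single i 1 ∈ L := fun i => by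
    simpa [single_mulVec_eq, inv_mul_cancel₀ hk] using h i k _ (L.smul_mem (v k)⁻¹ hvL)
  rw [eq_top_iff, ← (Pi.basisFun 𝕜 n).span_eq, span_le]
  rintro _ ⟨i, rfl⟩
  simpa using hbasis i

end MatrixUnits

theorem reindex_fromBlocks_fin_two {R : Type*} (A B C D : Matrix (Fin 2) (Fin 2) R) :
    reindex finSumFinEquiv finSumFinEquiv (fromBlocks A B C D) =
      !![A 0 0, A 0 1, B 0 0, B 0 1;
         A 1 0, A 1 1, B 1 0, B 1 1;
         C 0 0, C 0 1, D 0 0, D 0 1;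
         C 1 0, C 1 1, D 1 0, D 1 1] := by
  ext i j
  fin_cases i <;> fin_cases j <;> rfl

section FinFour

variable {𝕜 : Type*} [Field 𝕜] {S : Subalgebra 𝕜 (Matrix (Fin 4) (Fin 4) 𝕜)}

theorem single_add_single_mem_of_diagonal_mem {a b : 𝕜} (hab : a ≠ b)
    (h : diagonal ![a, a, b, b] ∈ S) : single 0 0 1 + single 1 1 1 ∈ S := by
  have hP : single 0 0 1 + single 1 1 1 = (a - b)⁻¹ • (diagonal ![a, a, b, b] - b • 1) := by
    ext i j
    fin_cases i <;> fin_cases j <;> simp [sub_ne_zero.2 hab]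
  rw [hP]
  exact S.smul_mem (S.sub_mem h (S.smul_mem S.one_mem b)) _

theorem forall_single_mem_of_blockProjection_mem {a b b' c s d e e' f : 𝕜}
    (hP : single 0 0 1 + single 1 1 1 ∈ S)
    (hK : !![a, b, s, 0; b', c, 0, 0; s, 0, d, e; 0, 0, e', f] ∈ S)
    (hs : s ≠ 0) (hb : b ≠ 0) (hb' : b' ≠ 0) (he : e ≠ 0) (he' : e' ≠ 0) :
    ∀ i j, single i j 1 ∈ S := by
  have hQ : single 2 2 1 + single 3 3 1 ∈ S := by
    have hQ_eq : single 2 2 1 + single 3 3 1 =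
        1 - (single 0 0 1 + single 1 1 1 : Matrix (Fin 4) (Fin 4) 𝕜) := by
      rw [← diagonal_one, ← sum_single_eq_diagonal, Fin.sum_univ_four]
      abel
    rw [hQ_eq]
    exact S.sub_mem S.one_mem hP
  have h02 : single 0 2 1 ∈ S := single_one_mem_of_single_mem hs <| by
    simpa [add_mul, mul_add] using S.mul_mem (S.mul_mem hP hK) hQ
  have h20 : single 2 0 1 ∈ S := single_one_mem_of_single_mem hs <| by
    simpa [add_mul, mul_add] using S.mul_mem (S.mul_mem hQ hK) hP
  have h00 : single 0 0 1 ∈ S := by simpa using S.mul_mem h02 h20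
  have h22 : single 2 2 1 ∈ S := by simpa using S.mul_mem h20 h02
  have h11 : single 1 1 1 ∈ S := by simpa using S.sub_mem hP h00
  have h33 : single 3 3 1 ∈ S := by simpa using S.sub_mem hQ h22
  have h10 : single 1 0 1 ∈ S := single_mem_of_apply_ne_zero hK h11 h00 (by simpa using hb')
  have h01 : single 0 1 1 ∈ S := single_mem_of_apply_ne_zero hK h00 h11 (by simpa using hb)
  have h23 : single 2 3 1 ∈ S := single_mem_of_apply_ne_zero hK h22 h33 (by simpa using he)
  have h32 : single 3 2 1 ∈ S := single_mem_of_apply_ne_zero hK h33 h22 (by simpa using he')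
  have hcol : ∀ i, single i 0 1 ∈ S := by
    intro i
    fin_cases i
    exacts [h00, h10, h20, by simpa using S.mul_mem h32 h20]
  have hrow : ∀ j, single 0 j 1 ∈ S := by
    intro j
    fin_cases j
    exacts [h00, h01, h02, by simpa using S.mul_mem h02 h23]
  intro i j
  simpa using S.mul_mem (hcol i) (hrow j)

end FinFour

/-- for H = diag[h₁,h₁,h₂,h₂] (h₁ ≠ h₂) and
K = [[K₁, Σ],[Σ, K₂]] with Σ = diag[σ₁, 0], σ₁ > 0, and both off-diagonal
entries (K₁)₁₂, (K₂)₁₂ nonzero, any subspace invariant under both H and K is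
trivial or everything. -/
theorem stmt12 (h₁ h₂ : ℝ) (hne : h₁ ≠ h₂) (σ₁ : ℝ) (hσ : 0 < σ₁)
    (K₁ K₂ : Matrix (Fin 2) (Fin 2) ℂ)
    (hK₁ : K₁ᴴ = K₁) (hK₂ : K₂ᴴ = K₂)
    (h12 : K₁ 0 1 ≠ 0) (h34 : K₂ 0 1 ≠ 0)
    (H K : Matrix (Fin 4) (Fin 4) ℂ)
    (hH : H = Matrix.diagonal ![(h₁ : ℂ), (h₁ : ℂ), (h₂ : ℂ), (h₂ : ℂ)])
    (hK : K = Matrix.reindex finSumFinEquiv finSumFinEquiv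
      (Matrix.fromBlocks K₁ (Matrix.diagonal ![(σ₁ : ℂ), 0])
        (Matrix.diagonal ![(σ₁ : ℂ), 0]) K₂))
    (L : Submodule ℂ (Fin 4 → ℂ))
    (hHL : ∀ v ∈ L, H.mulVec v ∈ L) (hKL : ∀ v ∈ L, K.mulVec v ∈ L) :
    L = ⊥ ∨ L = ⊤ := by
  have hHS : H ∈ L.matrixStabilizer := hHL
  have hKS : K ∈ L.matrixStabilizer := hKL
  rw [hH] at hHS
  rw [hK, reindex_fromBlocks_fin_two] at hKS
  simp only [diagonal_apply_eq, diagonal_apply_ne _ zero_ne_one, diagonal_apply_ne' _ zero_ne_one,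
    cons_val_zero, cons_val_one] at hKS
  have h21 : K₁ 1 0 ≠ 0 := by rwa [← hK₁, conjTranspose_apply, star_ne_zero]
  have h43 : K₂ 1 0 ≠ 0 := by rwa [← hK₂, conjTranspose_apply, star_ne_zero]
  exact L.eq_bot_or_eq_top_of_forall_single_mem_matrixStabilizer <|
    forall_single_mem_of_blockProjection_mem
      (single_add_single_mem_of_diagonal_mem (by exact_mod_cast hne) hHS) hKS
      (by exact_mod_cast hσ.ne') h12 h21 h34 h43
end

section
/- Let A ∈ ℂ^{n×n} with Hermitian decomposition A = H + iK, and let τ(A) = aH + ibK + cI for a, b, c ∈ ℂ with ab ≠ 0 and b/a not purely imaginary. Then the numerical range satisfies W(τ(A)) = τ(W(A)), where τ acts on ℂ ≅ ℝ² by τ(ξ + iη) = aξ + ibη + c. In particular, the Gau–Wu numbers satisfy k(τ(A)) = k(A). -/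
open Matrix Complex

noncomputable section

def nrange {n : ℕ} (A : Matrix (Fin n) (Fin n) ℂ) : Set ℂ :=
  {z | ∃ x : Fin n → ℂ, star x ⬝ᵥ x = 1 ∧ star x ⬝ᵥ A.mulVec x = z}

def gauWu {n : ℕ} (A : Matrix (Fin n) (Fin n) ℂ) : ℕ :=
  sSup {m | ∃ v : Fin m → (Fin n → ℂ),
    (∀ i j, star (v i) ⬝ᵥ v j = if i = j then 1 else 0) ∧
    ∀ i, star (v i) ⬝ᵥ A.mulVec (v i) ∈ frontier (nrange A)}

/-! For a unit vector `x` with `w = x* A x`, one has `x* H x = Re w` and `x* K x = Im w`, hence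
`x* τ(A) x = τ(w)`: the numerical range of `τ(A)` is the image of `W(A)` under `τ`. When `a ≠ 0`
and `Re (b / a) ≠ 0` the real-linear part of `τ` is injective, so `τ` is a homeomorphism of the
plane; it carries `∂W(A)` onto `∂W(τ(A))`, and the same orthonormal families witness `k(A)` and
`k(τ(A))`. -/

def reImLinearMap (a b : ℂ) : ℂ →ₗ[ℝ] ℂ where
  toFun z := a * z.re + I * b * z.im
  map_add' z w := by simp only [add_re, add_im, ofReal_add]; ring
  map_smul' r z := by
    simp only [real_smul, re_ofReal_mul, im_ofReal_mul, ofReal_mul, RingHom.id_apply]; ring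

theorem reImLinearMap_injective {a b : ℂ} (ha : a ≠ 0) (hba : (b / a).re ≠ 0) :
    Function.Injective (reImLinearMap a b) := by
  rw [injective_iff_map_eq_zero]
  intro z hz
  have h : (z.re : ℂ) + I * (b / a) * z.im = 0 := by
    rw [← mul_right_inj' ha, mul_zero, ← hz]
    simp only [reImLinearMap, LinearMap.coe_mk, AddHom.coe_mk]
    field_simp
  have him : (b / a).re * z.im = 0 := by simpa [mul_im] using congrArg im h
  have hzim : z.im = 0 := (mul_eq_zero.1 him).resolve_left hba
  have hzre : z.re = 0 := by simpa [hzim] using congrArg re h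
  exact Complex.ext hzre hzim

def reImAffineHomeomorph (a b c : ℂ) (ha : a ≠ 0) (hba : (b / a).re ≠ 0) : ℂ ≃ₜ ℂ :=
  (LinearEquiv.ofInjectiveEndo _ (reImLinearMap_injective ha hba)).toContinuousLinearEquiv
    |>.toHomeomorph.trans (Homeomorph.addRight c)

theorem reImAffineHomeomorph_apply (a b c : ℂ) (ha : a ≠ 0) (hba : (b / a).re ≠ 0) (z : ℂ) :
    reImAffineHomeomorph a b c ha hba z = a * z.re + I * b * z.im + c := rfl

section QuadraticForm

variable {ι : Type*} [Fintype ι] (A : Matrix ι ι ℂ) (x : ι → ℂ)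

theorem dotProduct_conjTranspose_mulVec :
    star x ⬝ᵥ Aᴴ *ᵥ x = star (star x ⬝ᵥ A *ᵥ x) := by
  rw [mulVec_conjTranspose, star_dotProduct_star, dotProduct_mulVec]

theorem dotProduct_realPart_mulVec :
    star x ⬝ᵥ ((2⁻¹ : ℂ) • (A + Aᴴ)) *ᵥ x = (star x ⬝ᵥ A *ᵥ x).re := by
  rw [smul_mulVec, add_mulVec, dotProduct_smul, dotProduct_add,
    dotProduct_conjTranspose_mulVec, star_def, add_conj, smul_eq_mul]
  push_cast
  ring

theorem dotProduct_imaginaryPart_mulVec :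
    star x ⬝ᵥ ((2 * I)⁻¹ • (A - Aᴴ)) *ᵥ x = (star x ⬝ᵥ A *ᵥ x).im := by
  rw [smul_mulVec, sub_mulVec, dotProduct_smul, dotProduct_sub,
    dotProduct_conjTranspose_mulVec, star_def, sub_conj, smul_eq_mul]
  field_simp
  push_cast
  ring

end QuadraticForm

section NumericalRange

variable {n : ℕ} {A B : Matrix (Fin n) (Fin n) ℂ}

theorem nrange_eq_image_of_dotProduct_mulVec (f : ℂ → ℂ)
    (hf : ∀ x : Fin n → ℂ, star x ⬝ᵥ x = 1 → star x ⬝ᵥ B *ᵥ x = f (star x ⬝ᵥ A *ᵥ x)) :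
    nrange B = f '' nrange A := by
  ext z
  constructor
  · rintro ⟨x, hx, rfl⟩
    exact ⟨_, ⟨x, hx, rfl⟩, (hf x hx).symm⟩
  · rintro ⟨_, ⟨x, hx, rfl⟩, rfl⟩
    exact ⟨x, hx, hf x hx⟩

theorem gauWu_eq_of_dotProduct_mulVec (f : ℂ ≃ₜ ℂ)
    (hf : ∀ x : Fin n → ℂ, star x ⬝ᵥ x = 1 → star x ⬝ᵥ B *ᵥ x = f (star x ⬝ᵥ A *ᵥ x)) :
    gauWu B = gauWu A := by
  have hfrontier : frontier (nrange B) = f '' frontier (nrange A) := by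
    rw [nrange_eq_image_of_dotProduct_mulVec f hf, f.image_frontier]
  unfold gauWu
  congr 1
  ext m
  refine exists_congr fun v => and_congr_right fun hv => forall_congr' fun i => ?_
  have hunit : star (v i) ⬝ᵥ v i = 1 := by simpa using hv i i
  rw [hf _ hunit, hfrontier, f.injective.mem_set_image]

end NumericalRange

theorem stmt15_general {n : ℕ} (A : Matrix (Fin n) (Fin n) ℂ)
    (a b c : ℂ) (ha : a ≠ 0) (hba : (b / a).re ≠ 0)
    (H K τA : Matrix (Fin n) (Fin n) ℂ)
    (hH : H = (2⁻¹ : ℂ) • (A + Aᴴ))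
    (hK : K = (2 * Complex.I)⁻¹ • (A - Aᴴ))
    (hτA : τA = a • H + (Complex.I * b) • K + c • (1 : Matrix (Fin n) (Fin n) ℂ)) :
    nrange τA =
      (fun z : ℂ => a * (z.re : ℂ) + Complex.I * b * (z.im : ℂ) + c) '' nrange A ∧
    gauWu τA = gauWu A := by
  have hτ : ∀ x : Fin n → ℂ, star x ⬝ᵥ x = 1 →
      star x ⬝ᵥ τA *ᵥ x = reImAffineHomeomorph a b c ha hba (star x ⬝ᵥ A *ᵥ x) := by
    intro x hx
    simp only [hτA, add_mulVec, smul_mulVec, one_mulVec, dotProduct_add, dotProduct_smul, hx]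
    rw [hH, hK, dotProduct_realPart_mulVec, dotProduct_imaginaryPart_mulVec,
      reImAffineHomeomorph_apply, smul_eq_mul, smul_eq_mul, smul_eq_mul, mul_one]
  exact ⟨nrange_eq_image_of_dotProduct_mulVec _ hτ, gauWu_eq_of_dotProduct_mulVec _ hτ⟩

/-- the affine transformation τ(A) = aH + ibK + cI satisfies
W(τ(A)) = τ(W(A)) (with τ acting on the plane by τ(ξ+iη) = aξ + ibη + c),
and k(τ(A)) = k(A). -/
theorem stmt15 {n : ℕ} (A : Matrix (Fin n) (Fin n) ℂ)
    (a b c : ℂ) (ha : a ≠ 0) (hb : b ≠ 0) (hba : (b / a).re ≠ 0)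
    (H K τA : Matrix (Fin n) (Fin n) ℂ)
    (hH : H = (2⁻¹ : ℂ) • (A + Aᴴ))
    (hK : K = (2 * Complex.I)⁻¹ • (A - Aᴴ))
    (hτA : τA = a • H + (Complex.I * b) • K + c • (1 : Matrix (Fin n) (Fin n) ℂ)) :
    nrange τA =
      (fun z : ℂ => a * (z.re : ℂ) + Complex.I * b * (z.im : ℂ) + c) '' nrange A ∧
    gauWu τA = gauWu A :=
  stmt15_general A a b c ha hba H K τA hH hK hτA
end
end

section
/- For any n×n complex matrix A with n ≥ 2, the Gau–Wu number satisfies 2 ≤ k(A) ≤ n; that is, there always exist two orthonormal vectors x, y ∈ ℂⁿ with ⟨Ax,x⟩ ∈ ∂W(A) and ⟨Ay,y⟩ ∈ ∂W(A). -/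
open Matrix Complex

noncomputable section

/-!
On the unit sphere, `Re ⟪x, A x⟫` is half the quadratic form of the Hermitian operator
`A + A†`, so it is squeezed between the smallest and largest eigenvalue of `A + A†` and attains
both at the corresponding vectors of an orthonormal eigenbasis. A point of `W(A)` at which `Re`
is extremal lies on a vertical support line, hence on `∂W(A)`: these two orthonormal
eigenvectors give `k(A) ≥ 2`, while an orthonormal family in `ℂⁿ` has at most `n` members.
-/

open Module Metric
open scoped InnerProductSpace

theorem IsExtrOn.image {α β γ : Type*} [Preorder γ] {f : β → γ} {g : α → β} {s : Set α}
    {a : α} (h : IsExtrOn (f ∘ g) s a) : IsExtrOn f (g '' s) (g a) :=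
  h.imp Set.forall_mem_image.2 Set.forall_mem_image.2

/-- At an interior extremum the derivative of `ℓ`, which is `ℓ` itself, would vanish. -/
theorem mem_frontier_of_isExtrOn {E : Type*} [NormedAddCommGroup E] [NormedSpace ℝ E]
    {ℓ : StrongDual ℝ E} (hℓ : ℓ ≠ 0) {S : Set E} {z : E} (hz : z ∈ S) (h : IsExtrOn ℓ S z) :
    z ∈ frontier S :=
  ⟨subset_closure hz, fun hint =>
    hℓ <| (h.isLocalExtr (mem_interior_iff_mem_nhds.mp hint)).hasFDerivAt_eq_zero ℓ.hasFDerivAt⟩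

variable {𝕜 E : Type*} [RCLike 𝕜] [NormedAddCommGroup E] [InnerProductSpace 𝕜 E]

def numericalRange (T : E →ₗ[𝕜] E) : Set 𝕜 :=
  (fun x => ⟪x, T x⟫_𝕜) '' sphere 0 1

theorem inner_apply_self_mem_frontier_numericalRange {T : E →ₗ[𝕜] E} {x : E}
    (hx : x ∈ sphere (0 : E) 1)
    (h : IsExtrOn (fun y => RCLike.re ⟪y, T y⟫_𝕜) (sphere 0 1) x) :
    ⟪x, T x⟫_𝕜 ∈ frontier (numericalRange T) := by
  refine mem_frontier_of_isExtrOn (ℓ := RCLike.reCLM) ?_ (Set.mem_image_of_mem _ hx) h.image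
  exact fun h => by simpa using congr($h (1 : 𝕜))

theorem re_inner_add_adjoint_apply_self [FiniteDimensional 𝕜 E] (T : E →ₗ[𝕜] E) (x : E) :
    RCLike.re ⟪x, (T + T.adjoint) x⟫_𝕜 = 2 * RCLike.re ⟪x, T x⟫_𝕜 := by
  rw [LinearMap.add_apply, inner_add_right, LinearMap.adjoint_inner_right, map_add,
    ← inner_conj_symm x, RCLike.conj_re]
  ring

namespace LinearMap.IsSymmetric

variable [FiniteDimensional 𝕜 E] {T : E →ₗ[𝕜] E} (hT : T.IsSymmetric) {n : ℕ}
  (hn : finrank 𝕜 E = n)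

theorem re_inner_apply_self_eq_sum (x : E) :
    RCLike.re ⟪x, T x⟫_𝕜 =
      ∑ i, hT.eigenvalues hn i * ‖⟪hT.eigenvectorBasis hn i, x⟫_𝕜‖ ^ 2 := by
  rw [← (hT.eigenvectorBasis hn).sum_inner_mul_inner, map_sum]
  refine Finset.sum_congr rfl fun i _ => ?_
  rw [← hT, apply_eigenvectorBasis, inner_smul_left, RCLike.conj_ofReal, ← inner_conj_symm x,
    mul_left_comm, RCLike.re_ofReal_mul, RCLike.conj_mul, ← RCLike.ofReal_pow, RCLike.ofReal_re]

theorem re_inner_apply_self_le {c : ℝ} (hc : ∀ i, hT.eigenvalues hn i ≤ c) (x : E) :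
    RCLike.re ⟪x, T x⟫_𝕜 ≤ c * ‖x‖ ^ 2 := by
  rw [hT.re_inner_apply_self_eq_sum hn, ← (hT.eigenvectorBasis hn).sum_sq_norm_inner_right,
    Finset.mul_sum]
  gcongr with i
  exact hc i

theorem le_re_inner_apply_self {c : ℝ} (hc : ∀ i, c ≤ hT.eigenvalues hn i) (x : E) :
    c * ‖x‖ ^ 2 ≤ RCLike.re ⟪x, T x⟫_𝕜 := by
  rw [hT.re_inner_apply_self_eq_sum hn, ← (hT.eigenvectorBasis hn).sum_sq_norm_inner_right,
    Finset.mul_sum]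
  gcongr with i
  exact hc i

theorem re_inner_eigenvectorBasis_apply_self (i : Fin n) :
    RCLike.re ⟪hT.eigenvectorBasis hn i, T (hT.eigenvectorBasis hn i)⟫_𝕜 =
      hT.eigenvalues hn i := by
  rw [apply_eigenvectorBasis, inner_smul_right, inner_self_eq_norm_sq_to_K,
    (hT.eigenvectorBasis hn).norm_eq_one]
  simp

theorem isMaxOn_eigenvectorBasis {i : Fin n}
    (hi : ∀ j, hT.eigenvalues hn j ≤ hT.eigenvalues hn i) :
    IsMaxOn (fun x => RCLike.re ⟪x, T x⟫_𝕜) (sphere 0 1) (hT.eigenvectorBasis hn i) :=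
  fun x hx => by
    have := hT.re_inner_apply_self_le hn hi x
    rwa [mem_sphere_zero_iff_norm.mp hx, one_pow, mul_one,
      ← hT.re_inner_eigenvectorBasis_apply_self hn] at this

theorem isMinOn_eigenvectorBasis {i : Fin n}
    (hi : ∀ j, hT.eigenvalues hn i ≤ hT.eigenvalues hn j) :
    IsMinOn (fun x => RCLike.re ⟪x, T x⟫_𝕜) (sphere 0 1) (hT.eigenvectorBasis hn i) :=
  fun x hx => by
    have := hT.le_re_inner_apply_self hn hi x
    rwa [mem_sphere_zero_iff_norm.mp hx, one_pow, mul_one,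
      ← hT.re_inner_eigenvectorBasis_apply_self hn] at this

end LinearMap.IsSymmetric

theorem exists_orthonormal_pair_mem_frontier_numericalRange [FiniteDimensional 𝕜 E]
    (hE : 2 ≤ finrank 𝕜 E) (T : E →ₗ[𝕜] E) :
    ∃ v : Fin 2 → E, Orthonormal 𝕜 v ∧ ∀ i, ⟪v i, T (v i)⟫_𝕜 ∈ frontier (numericalRange T) := by
  have hS : (T + T.adjoint).IsSymmetric := by
    rw [LinearMap.isSymmetric_iff_isSelfAdjoint, ← LinearMap.star_eq_adjoint]
    exact IsSelfAdjoint.add_star_self T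
  set b := hS.eigenvectorBasis rfl
  have hanti := hS.eigenvalues_antitone rfl
  let top : Fin (finrank 𝕜 E) := ⟨0, by omega⟩
  let bot : Fin (finrank 𝕜 E) := ⟨finrank 𝕜 E - 1, by omega⟩
  have hq : (fun x => RCLike.re ⟪x, T x⟫_𝕜) =
      (· / 2) ∘ fun x => RCLike.re ⟪x, (T + T.adjoint) x⟫_𝕜 := by
    ext x
    simp only [Function.comp_apply, re_inner_add_adjoint_apply_self]
    ring
  have hdiv : Monotone (· / 2 : ℝ → ℝ) := fun _ _ h => by linarith
  refine ⟨b ∘ ![top, bot], b.orthonormal.comp _ (injective_pair_iff_ne.2 ?_), ?_⟩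
  · simp [top, bot, Fin.ext_iff]
    omega
  simp only [Fin.forall_fin_two, Function.comp_apply, Matrix.cons_val_zero, Matrix.cons_val_one]
  refine ⟨inner_apply_self_mem_frontier_numericalRange (by simp [b.norm_eq_one]) ?_,
    inner_apply_self_mem_frontier_numericalRange (by simp [b.norm_eq_one]) ?_⟩
  · rw [hq]
    have hmax := hS.isMaxOn_eigenvectorBasis rfl fun j => hanti (show top ≤ j from Nat.zero_le _)
    exact hmax.isExtr.comp_mono hdiv
  · rw [hq]
    have hmin := hS.isMinOn_eigenvectorBasis rfl fun j =>
      hanti (show j ≤ bot from Nat.le_sub_one_of_lt j.2)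
    exact hmin.isExtr.comp_mono hdiv

section Matrix

open WithLp (toLp ofLp)

variable {ι : Type*} [Fintype ι]

theorem orthonormal_toLp_iff {κ : Type*} [DecidableEq κ] {v : κ → ι → 𝕜} :
    Orthonormal 𝕜 (fun i => toLp 2 (v i)) ↔
      ∀ i j, star (v i) ⬝ᵥ v j = if i = j then 1 else 0 := by
  simp only [orthonormal_iff_ite, EuclideanSpace.inner_toLp_toLp, dotProduct_comm]

theorem norm_toLp_eq_one_iff {x : ι → 𝕜} : ‖toLp 2 x‖ = 1 ↔ star x ⬝ᵥ x = 1 := by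
  rw [dotProduct_comm, ← EuclideanSpace.inner_toLp_toLp, inner_self_eq_norm_sq_to_K]
  norm_cast
  exact (pow_eq_one_iff_of_nonneg (norm_nonneg _) two_ne_zero).symm

theorem inner_toLp_toLpLin_toLp [DecidableEq ι] (A : Matrix ι ι 𝕜) (x : ι → 𝕜) :
    ⟪toLp 2 x, toLpLin 2 2 A (toLp 2 x)⟫_𝕜 = star x ⬝ᵥ A *ᵥ x := by
  rw [toLpLin_toLp, EuclideanSpace.inner_toLp_toLp, dotProduct_comm, toLin'_apply]

theorem card_le_of_dotProduct_orthonormal {m n : ℕ} {v : Fin m → Fin n → 𝕜}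
    (hv : ∀ i j, star (v i) ⬝ᵥ v j = if i = j then 1 else 0) : m ≤ n := by
  simpa using (orthonormal_toLp_iff.2 hv).linearIndependent.fintype_card_le_finrank

theorem nrange_eq_numericalRange {n : ℕ} (A : Matrix (Fin n) (Fin n) ℂ) :
    nrange A = numericalRange (toLpLin 2 2 A) := by
  ext z
  constructor
  · rintro ⟨x, hx, rfl⟩
    exact ⟨toLp 2 x, by simpa [norm_toLp_eq_one_iff], inner_toLp_toLpLin_toLp A x⟩
  · rintro ⟨x, hx, rfl⟩
    refine ⟨ofLp x, norm_toLp_eq_one_iff.1 (by simpa using hx), ?_⟩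
    rw [← inner_toLp_toLpLin_toLp, WithLp.toLp_ofLp]

theorem gauWu_le {n : ℕ} (A : Matrix (Fin n) (Fin n) ℂ) : gauWu A ≤ n :=
  csSup_le' fun _ ⟨_, hv, _⟩ => card_le_of_dotProduct_orthonormal hv

theorem le_gauWu {m n : ℕ} {A : Matrix (Fin n) (Fin n) ℂ} {v : Fin m → Fin n → ℂ}
    (hv : ∀ i j, star (v i) ⬝ᵥ v j = if i = j then 1 else 0)
    (hA : ∀ i, star (v i) ⬝ᵥ A *ᵥ v i ∈ frontier (nrange A)) : m ≤ gauWu A :=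
  le_csSup ⟨n, fun _ ⟨_, hv, _⟩ => card_le_of_dotProduct_orthonormal hv⟩ ⟨v, hv, hA⟩

end Matrix

/-- for n ≥ 2, the Gau–Wu number satisfies 2 ≤ k(A) ≤ n; in
particular there exist two orthonormal vectors mapping to ∂W(A). -/
theorem stmt19 {n : ℕ} (hn : 2 ≤ n) (A : Matrix (Fin n) (Fin n) ℂ) :
    2 ≤ gauWu A ∧ gauWu A ≤ n ∧
    ∃ x y : Fin n → ℂ, star x ⬝ᵥ x = 1 ∧ star y ⬝ᵥ y = 1 ∧
      star x ⬝ᵥ y = 0 ∧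
      star x ⬝ᵥ A.mulVec x ∈ frontier (nrange A) ∧
      star y ⬝ᵥ A.mulVec y ∈ frontier (nrange A) := by
  obtain ⟨v, hv, hfr⟩ :=
    exists_orthonormal_pair_mem_frontier_numericalRange (by simpa using hn) (toLpLin 2 2 A)
  let u i := WithLp.ofLp (v i)
  have hu : ∀ i j, star (u i) ⬝ᵥ u j = if i = j then 1 else 0 := orthonormal_toLp_iff.1 hv
  have hu_fr : ∀ i, star (u i) ⬝ᵥ A *ᵥ u i ∈ frontier (nrange A) := fun i => by
    rw [nrange_eq_numericalRange, ← inner_toLp_toLpLin_toLp]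
    exact hfr i
  exact ⟨le_gauWu hu hu_fr, gauWu_le A, u 0, u 1, hu 0 0, hu 1 1, hu 0 1, hu_fr 0, hu_fr 1⟩
end
end
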